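/- arXiv:math/0601082 — 6 statements merged into one kernel-verified Lean document; each statement's English description precedes it below -/
import Mathlib

section
/- For every real number w ≥ 0, the arctangent integral satisfies ∫₀ʷ (arctan u)/u du = (π/2) · ∫₀¹∫₀¹ log |1 + w² + (e^{2πis} + w)² · e^{2πit}| ds dt − (π/4) · log(1 + w²). -/
/-!
Jensen's formula for a linear polynomial, `∫₀¹ log |a + b e^{2πit}| dt = log (max |a| |b|)`,
turns the inner integral into `log (max (1 + w²) |y + w|²)`. Since
`|e^{iθ} + w|² = 1 + 2w cos θ + w²`, the maximum is `|y + w|²` exactly when `cos θ ≥ 0`, so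
the Mahler measure equals `log (1 + w²) / 2 + π⁻¹ ∫₀^{π/2} log (1 + 2w cos θ + w²) dθ`.
On the other side, `arctan v / v = ∫₀^{π/2} (cos θ + v) / (1 + 2v cos θ + v²) dθ`, and integrating
in `v` first gives `∫₀ʷ arctan u / u du = ½ ∫₀^{π/2} log (1 + 2w cos θ + w²) dθ`.
-/

open Real MeasureTheory intervalIntegral

noncomputable def logMahlerMeasure₂ (P : ℂ → ℂ → ℂ) : ℝ :=
  ∫ s in (0:ℝ)..1, ∫ t in (0:ℝ)..1,
    log ‖P (Complex.exp (2 * π * Complex.I * s)) (Complex.exp (2 * π * Complex.I * t))‖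

theorem intervalIntegral_comp_exp_eq_circleAverage {E : Type*} [NormedAddCommGroup E]
    [NormedSpace ℝ E] (f : ℂ → E) :
    ∫ t in (0:ℝ)..1, f (Complex.exp (2 * π * Complex.I * t)) = circleAverage f 0 1 := by
  have h := integral_comp_mul_left (fun θ ↦ f (circleMap 0 1 θ)) (c := 2 * π) (a := 0) (b := 1)
    (by positivity)
  simp only [mul_zero, mul_one] at h
  rw [circleAverage_def, ← h]
  congr 1 with t
  simp only [circleMap_zero, Complex.ofReal_one, one_mul, Complex.ofReal_mul,
    Complex.ofReal_ofNat]
  ring_nf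

theorem circleAverage_log_norm_add_mul (a b : ℂ) :
    circleAverage (fun z ↦ log ‖b + a * z‖) 0 1 = log (max ‖a‖ ‖b‖) := by
  rcases eq_or_ne a 0 with rfl | ha
  · simp [circleAverage_const]
  · rw [← Polynomial.mahlerMeasure_C_mul_X_add_C ha b,
      ← Polynomial.logMahlerMeasure_eq_log_MahlerMeasure, Polynomial.logMahlerMeasure_def]
    simp [add_comm]

theorem norm_sq_circleMap_zero_add_ofReal (r w θ : ℝ) :
    ‖circleMap 0 r θ + w‖ ^ 2 = r ^ 2 + 2 * r * w * cos θ + w ^ 2 := by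
  rw [Complex.sq_norm, Complex.normSq_apply]
  simp only [Complex.add_re, Complex.add_im, circleMap_zero_re, circleMap_zero_im,
    Complex.ofReal_re, Complex.ofReal_im, add_zero]
  linear_combination r ^ 2 * sin_sq_add_cos_sq θ

theorem integral_comp_cos_zero_two_pi {E : Type*} [NormedAddCommGroup E] [NormedSpace ℝ E]
    {g : ℝ → E} (hg : IntervalIntegrable (fun θ ↦ g (cos θ)) volume 0 π) :
    ∫ θ in (0:ℝ)..2 * π, g (cos θ) = (2:ℝ) • ∫ θ in (0:ℝ)..π, g (cos θ) := by
  have hreflect : ∀ θ, g (cos (2 * π - θ)) = g (cos θ) := fun θ ↦ by rw [cos_two_pi_sub]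
  have hg' : IntervalIntegrable (fun θ ↦ g (cos θ)) volume π (2 * π) := by
    have := (hg.comp_sub_left (2 * π)).symm
    simp only [hreflect, sub_zero] at this
    rwa [show 2 * π - π = π by ring] at this
  rw [← integral_add_adjacent_intervals hg hg', two_smul]
  congr 1
  have := integral_comp_sub_left (fun θ ↦ g (cos θ)) (2 * π) (a := 0) (b := π)
  simp only [hreflect, sub_zero] at this
  rw [this, show 2 * π - π = π by ring]

theorem cos_nonneg_of_mem_uIcc_zero_pi_div_two {θ : ℝ} (h : θ ∈ Set.uIcc 0 (π / 2)) :
    0 ≤ cos θ := by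
  rw [Set.uIcc_of_le (by positivity)] at h
  exact cos_nonneg_of_mem_Icc ⟨by linarith [h.1, pi_pos], h.2⟩

theorem integral_log_max_cos {w : ℝ} (hw : 0 ≤ w) :
    ∫ θ in (0:ℝ)..2 * π, log (max (1 + 2 * w * cos θ + w ^ 2) (1 + w ^ 2)) =
      π * log (1 + w ^ 2) + 2 * ∫ θ in (0:ℝ)..π / 2, log (1 + 2 * w * cos θ + w ^ 2) := by
  set g : ℝ → ℝ := fun x ↦ log (max (1 + 2 * w * x + w ^ 2) (1 + w ^ 2))
  have hg : Continuous g :=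
    (by fun_prop : Continuous fun x ↦ max (1 + 2 * w * x + w ^ 2) (1 + w ^ 2)).log
      fun x ↦ (lt_max_of_lt_right (by positivity)).ne'
  have hint : ∀ a b, IntervalIntegrable (fun θ ↦ g (cos θ)) volume a b := fun a b ↦
    (hg.comp continuous_cos).intervalIntegrable a b
  have hfirst : ∫ θ in (0:ℝ)..π / 2, g (cos θ) =
      ∫ θ in (0:ℝ)..π / 2, log (1 + 2 * w * cos θ + w ^ 2) := by
    refine integral_congr fun θ hθ ↦ ?_
    have := cos_nonneg_of_mem_uIcc_zero_pi_div_two hθ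
    simp only [g]
    rw [max_eq_left (by nlinarith)]
  have hsecond : ∫ θ in π / 2..π, g (cos θ) = π / 2 * log (1 + w ^ 2) := by
    rw [integral_congr (g := fun _ ↦ log (1 + w ^ 2)) fun θ hθ ↦ ?_]
    · rw [intervalIntegral.integral_const, smul_eq_mul]
      ring
    rw [Set.uIcc_of_le (by linarith [pi_pos])] at hθ
    have := cos_nonpos_of_pi_div_two_le_of_le hθ.1 (by linarith [hθ.2, pi_pos])
    simp only [g]
    rw [max_eq_right (by nlinarith)]
  change ∫ θ in (0:ℝ)..2 * π, g (cos θ) = _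
  rw [integral_comp_cos_zero_two_pi (hint 0 π),
    ← integral_add_adjacent_intervals (hint 0 (π / 2)) (hint (π / 2) π), hfirst, hsecond,
    smul_eq_mul]
  ring

theorem hasDerivAt_arctan_mul_sin_div {v θ : ℝ} (h : 1 + v * cos θ ≠ 0) :
    HasDerivAt (fun θ ↦ arctan (v * sin θ / (1 + v * cos θ)))
      (v * (cos θ + v) / (1 + 2 * v * cos θ + v ^ 2)) θ := by
  have hquot := ((hasDerivAt_sin θ).const_mul v).div
    (((hasDerivAt_cos θ).const_mul v).const_add 1) h
  refine ((hasDerivAt_arctan _).comp θ hquot).congr_deriv ?_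
  simp only [Pi.div_apply]
  have hden : 1 + 2 * v * cos θ + v ^ 2 = (1 + v * cos θ) ^ 2 + (v * sin θ) ^ 2 := by
    linear_combination v ^ 2 * (sin_sq_add_cos_sq θ).symm
  rw [hden]
  field_simp
  linear_combination v ^ 2 * (sin_sq_add_cos_sq θ)

theorem integral_cos_add_div_eq_arctan_div {v : ℝ} (hv : 0 < v) :
    ∫ θ in (0:ℝ)..π / 2, (cos θ + v) / (1 + 2 * v * cos θ + v ^ 2) = arctan v / v := by
  have hcos : ∀ θ ∈ Set.uIcc 0 (π / 2), 0 ≤ cos θ :=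
    fun _ ↦ cos_nonneg_of_mem_uIcc_zero_pi_div_two
  have hderiv : ∀ θ ∈ Set.uIcc 0 (π / 2), HasDerivAt
      (fun θ ↦ arctan (v * sin θ / (1 + v * cos θ)) / v)
      ((cos θ + v) / (1 + 2 * v * cos θ + v ^ 2)) θ := fun θ hθ ↦ by
    have hden : 1 + v * cos θ ≠ 0 := by nlinarith [hcos θ hθ]
    refine ((hasDerivAt_arctan_mul_sin_div hden).div_const v).congr_deriv ?_
    field_simp
  rw [integral_eq_sub_of_hasDerivAt hderiv (ContinuousOn.intervalIntegrable
    (ContinuousOn.div (by fun_prop) (by fun_prop) fun θ hθ ↦ by nlinarith [hcos θ hθ]))]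
  simp

theorem integral_add_div_eq_log {x w : ℝ} (hx : 0 ≤ x) (hw : 0 ≤ w) :
    ∫ v in (0:ℝ)..w, (x + v) / (1 + 2 * v * x + v ^ 2) = log (1 + 2 * w * x + w ^ 2) / 2 := by
  have hpos : ∀ v ∈ Set.uIcc 0 w, 0 < 1 + 2 * v * x + v ^ 2 := fun v hv ↦ by
    rw [Set.uIcc_of_le hw] at hv
    nlinarith [hv.1]
  have hderiv : ∀ v ∈ Set.uIcc 0 w, HasDerivAt (fun v ↦ log (1 + 2 * v * x + v ^ 2) / 2)
      ((x + v) / (1 + 2 * v * x + v ^ 2)) v := fun v hv ↦ by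
    have hpoly : HasDerivAt (fun v ↦ 1 + 2 * v * x + v ^ 2) (2 * x + 2 * v) v := by
      refine ((((hasDerivAt_id' v).const_mul 2).mul_const x).const_add 1 |>.add
        (hasDerivAt_pow 2 v)).congr_deriv ?_
      norm_num
    refine ((hpoly.log (hpos v hv).ne').div_const 2).congr_deriv ?_
    field_simp
  rw [integral_eq_sub_of_hasDerivAt hderiv (ContinuousOn.intervalIntegrable
    (ContinuousOn.div (by fun_prop) (by fun_prop) fun v hv ↦ (hpos v hv).ne'))]
  simp

theorem integral_arctan_div_eq_integral_log {w : ℝ} (hw : 0 ≤ w) :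
    ∫ u in (0:ℝ)..w, arctan u / u =
      (∫ θ in (0:ℝ)..π / 2, log (1 + 2 * w * cos θ + w ^ 2)) / 2 := by
  set F : ℝ → ℝ → ℝ := fun v θ ↦ (cos θ + v) / (1 + 2 * v * cos θ + v ^ 2)
  have hF : IntegrableOn F.uncurry (Set.uIoc 0 w ×ˢ Set.uIoc 0 (π / 2)) := by
    refine ContinuousOn.integrableOn_compact (isCompact_uIcc.prod isCompact_uIcc) ?_
      |>.mono_set (Set.prod_mono Set.uIoc_subset_uIcc Set.uIoc_subset_uIcc)
    refine ContinuousOn.div (by fun_prop) (by fun_prop) ?_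
    rintro ⟨v, θ⟩ ⟨hv, hθ⟩
    rw [Set.uIcc_of_le hw] at hv
    have := cos_nonneg_of_mem_uIcc_zero_pi_div_two hθ
    dsimp only
    nlinarith [hv.1]
  calc ∫ u in (0:ℝ)..w, arctan u / u
      = ∫ v in (0:ℝ)..w, ∫ θ in (0:ℝ)..π / 2, F v θ := by
        refine integral_congr_ae (Filter.Eventually.of_forall fun v hv ↦ ?_)
        rw [Set.uIoc_of_le hw] at hv
        exact (integral_cos_add_div_eq_arctan_div hv.1).symm
    _ = ∫ θ in (0:ℝ)..π / 2, ∫ v in (0:ℝ)..w, F v θ :=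
        intervalIntegral_intervalIntegral_swap hF
    _ = ∫ θ in (0:ℝ)..π / 2, log (1 + 2 * w * cos θ + w ^ 2) / 2 := by
        refine integral_congr fun θ hθ ↦ ?_
        exact integral_add_div_eq_log (cos_nonneg_of_mem_uIcc_zero_pi_div_two hθ) hw
    _ = _ := integral_div _ _

theorem logMahlerMeasure₂_eq_integral_log {w : ℝ} (hw : 0 ≤ w) :
    logMahlerMeasure₂ (fun y z ↦ ((1 + w ^ 2 : ℝ) : ℂ) + (y + w) ^ 2 * z) =
      log (1 + w ^ 2) / 2 + (∫ θ in (0:ℝ)..π / 2, log (1 + 2 * w * cos θ + w ^ 2)) / π := by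
  have hA : ‖((1 + w ^ 2 : ℝ) : ℂ)‖ = 1 + w ^ 2 := by
    rw [Complex.norm_real, norm_of_nonneg (by positivity)]
  calc logMahlerMeasure₂ (fun y z ↦ ((1 + w ^ 2 : ℝ) : ℂ) + (y + w) ^ 2 * z)
      = ∫ s in (0:ℝ)..1,
          log (max ‖(Complex.exp (2 * π * Complex.I * s) + w) ^ 2‖ (1 + w ^ 2)) :=
        integral_congr fun s _ ↦ by
          have := intervalIntegral_comp_exp_eq_circleAverage fun z ↦
            log ‖((1 + w ^ 2 : ℝ) : ℂ) + (Complex.exp (2 * π * Complex.I * s) + w) ^ 2 * z‖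
          rwa [circleAverage_log_norm_add_mul, hA] at this
    _ = circleAverage (fun z ↦ log (max ‖(z + w) ^ 2‖ (1 + w ^ 2))) 0 1 :=
        intervalIntegral_comp_exp_eq_circleAverage fun z ↦ log (max ‖(z + w) ^ 2‖ (1 + w ^ 2))
    _ = (2 * π)⁻¹ *
          ∫ θ in (0:ℝ)..2 * π, log (max (1 + 2 * w * cos θ + w ^ 2) (1 + w ^ 2)) := by
        simp_rw [circleAverage_def, smul_eq_mul, norm_pow, norm_sq_circleMap_zero_add_ofReal,
          one_pow, mul_one]
    _ = _ := by
        rw [integral_log_max_cos hw]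
        field_simp

theorem arctan_integral_eq_mahler (w : ℝ) (hw : 0 ≤ w) :
    (∫ u in (0:ℝ)..w, Real.arctan u / u) =
      (Real.pi / 2) *
        (∫ s in (0:ℝ)..1, ∫ t in (0:ℝ)..1,
          Real.log ‖((1 + w ^ 2 : ℝ) +
            (Complex.exp (2 * Real.pi * Complex.I * s) + (w : ℂ)) ^ 2 *
              Complex.exp (2 * Real.pi * Complex.I * t) : ℂ)‖)
      - (Real.pi / 4) * Real.log (1 + w ^ 2) := by
  change _ =
    π / 2 * logMahlerMeasure₂ (fun y z ↦ ((1 + w ^ 2 : ℝ) : ℂ) + (y + w) ^ 2 * z) - _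
  rw [integral_arctan_div_eq_integral_log hw, logMahlerMeasure₂_eq_integral_log hw]
  field_simp
  ring
end

section
/- Let v be a real number and w a real number with w ∈ [−1,1] and w ≠ 0. Set R = (v/w)/(1 + √(1 + (v/w)²)) (a real number with |R| < 1) and S = iw + √(1 − w²) (a complex number with |S| = 1). Then TS(v,w) = 2F₃(R) − F₃(RS) − F₃(R/S) − 4F_{1,2}(R,1) + 2F_{1,2}(R,S) + 2F_{1,2}(R,1/S) + i·arcsin(w)·( F₂(RS) − F₂(R/S) − 2F_{1,1}(R,S) + 2F_{1,1}(R,1/S) ), where the real number TS(v,w) is regarded as a complex number. -/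
/-!
Put `u = v / w = tan α`, so that `R = tan (α / 2)` and `u = 2R / (1 - R²)`. For `t = arcsin (w x)`
the factor `arctan (v x) = arctan (2R sin t / (1 - R²))` is the imaginary part of
`log ((1 + z) / (1 - z))` at `z = R e^{it}`, i.e. `∑ 2R^{2n+1} sin((2n+1)t) / (2n+1)`.
Integrating termwise (dominated by `π |R|^{2n+1}`), the `n`-th integral becomes
`∫₀^{arcsin w} t sin((2n+1)t) cos t / sin t dt`, and
`sin((2n+1)t) cos t = sin t (2 ∑_{m ≤ n} cos((2m+1)t) - cos((2n+1)t))` makes it elementary.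
Expanding the cosines and sines of odd multiples of `θ = arcsin w` in powers of `S = e^{iθ}` and
summing over `n` produces the multiple polylogarithms.
-/

open Real MeasureTheory intervalIntegral

/-- `TS(v,w) = ∫₀¹ arctan(vx) arcsin(wx) / x dx` -/
noncomputable def TS (v w : ℝ) : ℝ :=
  ∫ x in (0:ℝ)..1, Real.arctan (v * x) * Real.arcsin (w * x) / x

/-- `F_j(x) = ∑_{n≥0} x^(2n+1)/(2n+1)^j` -/
noncomputable def Fc (j : ℕ) (x : ℂ) : ℂ :=
  ∑' n : ℕ, x ^ (2 * n + 1) / ((2 * n + 1 : ℕ) : ℂ) ^ j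

/-- `F_{j,k}(x,y) = ∑_{n≥0} (x^(2n+1)/(2n+1)^j) ∑_{m=0}^n y^(2m+1)/(2m+1)^k` -/
noncomputable def Fcc (j k : ℕ) (x y : ℂ) : ℂ :=
  ∑' n : ℕ, (x ^ (2 * n + 1) / ((2 * n + 1 : ℕ) : ℂ) ^ j) *
    ∑ m ∈ Finset.range (n + 1), y ^ (2 * m + 1) / ((2 * m + 1 : ℕ) : ℂ) ^ k

lemma summable_odd_pow_mul {r : ℝ} (h0 : 0 ≤ r) (h1 : r < 1) :
    Summable (fun n : ℕ => ((2 * n + 1 : ℕ) : ℝ) * r ^ (2 * n + 1)) := by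
  have hsum := summable_pow_mul_geometric_of_norm_lt_one 1
    (show ‖r‖ < 1 by rwa [Real.norm_of_nonneg h0])
  simpa [Function.comp_def] using
    hsum.comp_injective (i := fun n : ℕ => 2 * n + 1) (fun a b h => by simpa using h)

lemma summable_odd_pow {r : ℝ} (h0 : 0 ≤ r) (h1 : r < 1) :
    Summable (fun n : ℕ => r ^ (2 * n + 1)) :=
  (summable_geometric_of_lt_one h0 h1).comp_injective (i := fun n : ℕ => 2 * n + 1)
    (fun a b h => by simpa using h)

noncomputable def oddPowTerm (j : ℕ) (x : ℂ) (n : ℕ) : ℂ :=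
  x ^ (2 * n + 1) / ((2 * n + 1 : ℕ) : ℂ) ^ j

lemma norm_oddPowTerm_le (j : ℕ) (x : ℂ) (n : ℕ) : ‖oddPowTerm j x n‖ ≤ ‖x‖ ^ (2 * n + 1) := by
  rw [oddPowTerm, norm_div, norm_pow, norm_pow, Complex.norm_natCast]
  exact div_le_self (by positivity) (one_le_pow₀ (by simp))

lemma oddPowTerm_mul (j k : ℕ) (x y : ℂ) (n : ℕ) :
    oddPowTerm j x n * oddPowTerm k y n = oddPowTerm (j + k) (x * y) n := by
  simp only [oddPowTerm]
  ring

lemma hasSum_Fc (j : ℕ) {x : ℂ} (hx : ‖x‖ < 1) : HasSum (oddPowTerm j x) (Fc j x) :=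
  (Summable.of_norm_bounded (summable_odd_pow (norm_nonneg x) hx) (norm_oddPowTerm_le j x)).hasSum

lemma hasSum_Fcc (j k : ℕ) {x y : ℂ} (hx : ‖x‖ < 1) (hy : ‖y‖ ≤ 1) :
    HasSum (fun n => oddPowTerm j x n * ∑ m ∈ Finset.range (n + 1), oddPowTerm k y m)
      (Fcc j k x y) := by
  refine (Summable.of_norm_bounded (summable_odd_pow_mul (norm_nonneg x) hx) fun n => ?_).hasSum
  have hinner : ‖∑ m ∈ Finset.range (n + 1), oddPowTerm k y m‖ ≤ n + 1 := by
    calc _ ≤ ∑ m ∈ Finset.range (n + 1), ‖oddPowTerm k y m‖ := norm_sum_le _ _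
      _ ≤ ∑ m ∈ Finset.range (n + 1), (1 : ℝ) := Finset.sum_le_sum fun m _ =>
          (norm_oddPowTerm_le k y m).trans (pow_le_one₀ (norm_nonneg y) hy)
      _ = n + 1 := by simp
  rw [norm_mul, mul_comm ((2 * n + 1 : ℕ) : ℝ)]
  exact mul_le_mul (norm_oddPowTerm_le j x n) (hinner.trans (by push_cast; linarith))
    (norm_nonneg _) (by positivity)

open Complex in
lemma hasSum_log_one_add_div_one_sub {z : ℂ} (hz : ‖z‖ < 1) :
    HasSum (fun n : ℕ => 2 * z ^ (2 * n + 1) / ((2 * n + 1 : ℕ) : ℂ))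
      (log ((1 + z) / (1 - z))) := by
  have h := (hasSum_arctan (z := -(z * I)) (by simpa using hz)).mul_left (2 * I)
  have hI : -(z * I) * I = z := by rw [neg_mul, mul_assoc, I_mul_I]; ring
  rw [Complex.arctan, hI, ← mul_assoc, show 2 * I * (-I / 2) = 1 by ring_nf; simp, one_mul] at h
  refine h.congr_fun fun n => ?_
  rw [neg_pow (z * I), mul_pow, pow_succ I, pow_mul I, I_sq]
  have hsign : (-1 : ℂ) ^ n * (-1) ^ (2 * n + 1) * (-1) ^ n = -1 := by
    rw [← pow_add, ← pow_add]
    exact Odd.neg_one_pow ⟨2 * n, by ring⟩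
  linear_combination (-2 * I ^ 2 * z ^ (2 * n + 1) / ((2 * n + 1 : ℕ) : ℂ)) * hsign
    + 2 * z ^ (2 * n + 1) / ((2 * n + 1 : ℕ) : ℂ) * I_sq

open Complex in
lemma arg_one_add_div_one_sub {z : ℂ} (hz : ‖z‖ < 1) :
    arg ((1 + z) / (1 - z)) = Real.arctan (2 * z.im / (1 - ‖z‖ ^ 2)) := by
  have hnorm : ‖z‖ ^ 2 = z.re ^ 2 + z.im ^ 2 := by rw [Complex.sq_norm, normSq_apply]; ring
  have hden : 0 < normSq (1 - z) := normSq_pos.mpr fun h => by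
    rw [← sub_eq_zero.mp h, norm_one] at hz
    exact lt_irrefl _ hz
  have hre : ((1 + z) / (1 - z)).re = (1 - ‖z‖ ^ 2) / normSq (1 - z) := by
    rw [div_re, hnorm]
    simp only [add_re, one_re, sub_re, add_im, one_im, sub_im]
    rw [← add_div]
    ring
  have him : ((1 + z) / (1 - z)).im = 2 * z.im / normSq (1 - z) := by
    rw [div_im]
    simp only [add_re, one_re, sub_re, add_im, one_im, sub_im]
    rw [← sub_div]
    ring
  have hre_pos : 0 < ((1 + z) / (1 - z)).re := by
    rw [hre]; exact div_pos (by nlinarith [norm_nonneg z]) hden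
  have harg := abs_lt.mp (abs_arg_lt_pi_div_two_iff.mpr (Or.inl hre_pos))
  rw [← Real.arctan_tan harg.1 harg.2, tan_arg, hre, him, div_div_div_cancel_right₀ hden.ne']

lemma hasSum_arctan_two_mul_sin_div {R : ℝ} (hR : |R| < 1) (t : ℝ) :
    HasSum (fun n : ℕ => 2 * R ^ (2 * n + 1) / ((2 * n + 1 : ℕ) : ℝ) * sin ((2 * n + 1 : ℕ) * t))
      (arctan (2 * R * sin t / (1 - R ^ 2))) := by
  set z : ℂ := R * Complex.exp (t * Complex.I)
  have hz : ‖z‖ = |R| := by simp [z]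
  have h := Complex.hasSum_im (hasSum_log_one_add_div_one_sub (hz ▸ hR))
  have hzim : z.im = R * sin t := by simp [z, Complex.exp_ofReal_mul_I_im]
  rw [Complex.log_im, arg_one_add_div_one_sub (hz ▸ hR), hz, sq_abs, hzim, ← mul_assoc] at h
  refine h.congr_fun fun n => ?_
  rw [mul_pow, ← Complex.exp_nat_mul, ← mul_assoc]
  have hterm : 2 * (R : ℂ) ^ (2 * n + 1) * Complex.exp ((2 * n + 1 : ℕ) * (t * Complex.I))
        / ((2 * n + 1 : ℕ) : ℂ)
      = ((2 * R ^ (2 * n + 1) / (2 * n + 1 : ℕ) : ℝ) : ℂ)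
        * Complex.exp (((2 * n + 1 : ℕ) * t : ℝ) * Complex.I) := by
    push_cast
    ring_nf
  rw [hterm, Complex.im_ofReal_mul, Complex.exp_ofReal_mul_I_im]

noncomputable def mulCosPrimitive (k t : ℝ) : ℝ := t * sin (k * t) / k + cos (k * t) / k ^ 2

lemma hasDerivAt_mulCosPrimitive {k : ℝ} (hk : k ≠ 0) (t : ℝ) :
    HasDerivAt (mulCosPrimitive k) (t * cos (k * t)) t := by
  have hkt : HasDerivAt (fun t => k * t) k t := by simpa using (hasDerivAt_id t).const_mul k
  have h := (((hasDerivAt_id t).mul hkt.sin).div_const k).add (hkt.cos.div_const (k ^ 2))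
  refine h.congr_deriv ?_
  simp only [id]
  field_simp
  ring

/-- A primitive of `t ↦ t sin((2n+1)t) cos t / sin t`, by `sin_odd_mul_mul_cos`. -/
noncomputable def dirichletPrimitive (n : ℕ) (t : ℝ) : ℝ :=
  2 * ∑ m ∈ Finset.range (n + 1), mulCosPrimitive (2 * m + 1 : ℕ) t
    - mulCosPrimitive (2 * n + 1 : ℕ) t

lemma sin_odd_mul_mul_cos (n : ℕ) (t : ℝ) :
    sin ((2 * n + 1 : ℕ) * t) * cos t = sin t *
      (2 * ∑ m ∈ Finset.range (n + 1), cos ((2 * m + 1 : ℕ) * t) - cos ((2 * n + 1 : ℕ) * t)) := by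
  induction n with
  | zero =>
    simp only [Nat.mul_zero, Nat.zero_add, Finset.sum_range_one, Nat.cast_one, one_mul]
    ring
  | succ n ih =>
    rw [Finset.sum_range_succ]
    push_cast at ih ⊢
    rw [show (2 * ((n : ℝ) + 1) + 1) * t = (2 * n + 1) * t + 2 * t by ring,
      sin_add, cos_add, sin_two_mul, cos_two_mul']
    linear_combination ih + (sin ((2 * n + 1) * t) * cos t + cos ((2 * n + 1) * t) * sin t)
      * sin_sq_add_cos_sq t

lemma hasDerivAt_dirichletPrimitive (n : ℕ) (t : ℝ) :
    HasDerivAt (dirichletPrimitive n)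
      (t * (2 * ∑ m ∈ Finset.range (n + 1), cos ((2 * m + 1 : ℕ) * t)
        - cos ((2 * n + 1 : ℕ) * t))) t := by
  have hk (m : ℕ) : ((2 * m + 1 : ℕ) : ℝ) ≠ 0 := by positivity
  have hsum := HasDerivAt.fun_sum (u := Finset.range (n + 1)) fun m _ =>
    hasDerivAt_mulCosPrimitive (hk m) t
  have h := (hsum.const_mul 2).sub (hasDerivAt_mulCosPrimitive (hk n) t)
  refine h.congr_deriv ?_
  simp only [mul_sub, Finset.mul_sum]
  congr 1
  exact Finset.sum_congr rfl fun m _ => by ring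

lemma abs_arcsin_le_pi_div_two_mul_abs {y : ℝ} (hy : |y| ≤ 1) : |arcsin y| ≤ π / 2 * |y| := by
  have habs : |arcsin y| = arcsin |y| := by
    rcases abs_cases y with ⟨h, hy0⟩ | ⟨h, hy0⟩
    · rw [h, abs_of_nonneg (arcsin_nonneg.mpr hy0)]
    · rw [h, arcsin_neg, abs_of_nonpos (arcsin_nonpos.mpr hy0.le)]
  have hsin := mul_le_sin (arcsin_nonneg.mpr (abs_nonneg y)) (arcsin_le_pi_div_two |y|)
  rw [sin_arcsin (by linarith [abs_nonneg y]) hy] at hsin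
  rw [habs]
  have := pi_pos
  calc arcsin |y| = π / 2 * (2 / π * arcsin |y|) := by field_simp
    _ ≤ π / 2 * |y| := by gcongr

lemma abs_sin_mul_arcsin_div_le {w x : ℝ} (hw : |w| ≤ 1) (hx : x ∈ Set.Ioc 0 1) (k : ℝ) :
    |sin (k * arcsin (w * x)) * arcsin (w * x) / x| ≤ π / 2 := by
  have hwx : |w * x| ≤ x := by
    rw [abs_mul, abs_of_pos hx.1]
    exact mul_le_of_le_one_left hx.1.le hw
  rw [abs_div, abs_mul, abs_of_pos hx.1, div_le_iff₀ hx.1]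
  calc |sin (k * arcsin (w * x))| * |arcsin (w * x)| ≤ 1 * (π / 2 * |w * x|) :=
        mul_le_mul (abs_sin_le_one _) (abs_arcsin_le_pi_div_two_mul_abs (hwx.trans hx.2))
          (abs_nonneg _) zero_le_one
    _ ≤ π / 2 * x := by rw [one_mul]; gcongr

lemma intervalIntegrable_sin_mul_arcsin_div {w : ℝ} (hw : |w| ≤ 1) (k : ℝ) :
    IntervalIntegrable (fun x => sin (k * arcsin (w * x)) * arcsin (w * x) / x) volume 0 1 := by
  refine (intervalIntegrable_const (c := π / 2)).mono_fun'
    (Measurable.aestronglyMeasurable (by fun_prop)) ?_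
  rw [Set.uIoc_of_le zero_le_one, Filter.EventuallyLE, ae_restrict_iff' measurableSet_Ioc]
  exact Filter.Eventually.of_forall fun x hx => abs_sin_mul_arcsin_div_le hw hx k

lemma hasDerivAt_dirichletPrimitive_arcsin {w x : ℝ} (hwx : |w * x| < 1) (hx : x ≠ 0) (n : ℕ) :
    HasDerivAt (fun x => dirichletPrimitive n (arcsin (w * x)))
      (sin ((2 * n + 1 : ℕ) * arcsin (w * x)) * arcsin (w * x) / x) x := by
  obtain ⟨hlo, hhi⟩ := abs_lt.mp hwx
  have harcsin := (hasDerivAt_arcsin hlo.ne' hhi.ne).comp x ((hasDerivAt_id x).const_mul w)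
  have h := (hasDerivAt_dirichletPrimitive n (arcsin (w * x))).comp x harcsin
  refine h.congr_deriv ?_
  have hcos : 0 < cos (arcsin (w * x)) :=
    cos_pos_of_mem_Ioo ⟨neg_pi_div_two_lt_arcsin.mpr hlo, arcsin_lt_pi_div_two.mpr hhi⟩
  have hdir := sin_odd_mul_mul_cos n (arcsin (w * x))
  rw [sin_arcsin hlo.le hhi.le] at hdir
  rw [← cos_arcsin]
  field_simp
  linear_combination (norm := ring_nf) -arcsin (w * x) * hdir

lemma integral_sin_mul_arcsin_div {w : ℝ} (hw : |w| ≤ 1) (n : ℕ) :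
    ∫ x in (0 : ℝ)..1, sin ((2 * n + 1 : ℕ) * arcsin (w * x)) * arcsin (w * x) / x
      = dirichletPrimitive n (arcsin w) - dirichletPrimitive n 0 := by
  have hcont : Continuous (dirichletPrimitive n) := by
    unfold dirichletPrimitive mulCosPrimitive
    fun_prop
  have h := intervalIntegral.integral_eq_sub_of_hasDerivAt_of_le zero_le_one
    (hcont.comp (by fun_prop : Continuous fun x => arcsin (w * x))).continuousOn
    (fun x hx => hasDerivAt_dirichletPrimitive_arcsin ?_ hx.1.ne' n)
    (intervalIntegrable_sin_mul_arcsin_div hw _)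
  · simpa using h
  · rw [abs_mul, abs_of_pos hx.1]
    exact mul_lt_one_of_nonneg_of_lt_one_right hw hx.1.le hx.2

lemma hasSum_TS {v w R : ℝ} (hw : |w| ≤ 1) (hR : |R| < 1) (hv : v * (1 - R ^ 2) = 2 * R * w) :
    HasSum (fun n : ℕ => 2 * R ^ (2 * n + 1) / ((2 * n + 1 : ℕ) : ℝ)
      * (dirichletPrimitive n (arcsin w) - dirichletPrimitive n 0)) (TS v w) := by
  have h := intervalIntegral.hasSum_integral_of_dominated_convergence
    (F := fun (n : ℕ) x => 2 * R ^ (2 * n + 1) / ((2 * n + 1 : ℕ) : ℝ)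
      * (sin ((2 * n + 1 : ℕ) * arcsin (w * x)) * arcsin (w * x) / x))
    (f := fun x => arctan (v * x) * arcsin (w * x) / x) (μ := volume) (a := 0) (b := 1)
    (fun n _ => π * |R| ^ (2 * n + 1))
    (fun n => by
      rw [Set.uIoc_of_le zero_le_one]
      exact ((intervalIntegrable_sin_mul_arcsin_div hw _).const_mul _).aestronglyMeasurable)
    ?bound ?summable intervalIntegrable_const ?limit
  · simpa only [TS, intervalIntegral.integral_const_mul, integral_sin_mul_arcsin_div hw] using h
  case bound =>
    refine fun n => Filter.Eventually.of_forall fun x hx => ?_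
    rw [Set.uIoc_of_le zero_le_one] at hx
    rw [norm_mul, Real.norm_eq_abs, Real.norm_eq_abs, abs_div, abs_mul, abs_pow, abs_two,
      Nat.abs_cast]
    calc 2 * |R| ^ (2 * n + 1) / ((2 * n + 1 : ℕ) : ℝ) * |_|
        ≤ 2 * |R| ^ (2 * n + 1) / 1 * (π / 2) := by
          gcongr
          · exact_mod_cast Nat.succ_pos _
          · exact abs_sin_mul_arcsin_div_le hw hx _
      _ = π * |R| ^ (2 * n + 1) := by ring
  case summable =>
    exact Filter.Eventually.of_forall fun _ _ =>
      (summable_odd_pow (abs_nonneg R) hR).mul_left π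
  case limit =>
    refine Filter.Eventually.of_forall fun x hx => ?_
    rw [Set.uIoc_of_le zero_le_one] at hx
    have hwx : |w * x| ≤ 1 := by
      rw [abs_mul, abs_of_pos hx.1]
      exact mul_le_one₀ hw hx.1.le hx.2
    obtain ⟨hlo, hhi⟩ := abs_le.mp hwx
    have hR2 : 0 < 1 - R ^ 2 := by nlinarith [sq_abs R, abs_nonneg R]
    have hs := (hasSum_arctan_two_mul_sin_div hR (arcsin (w * x))).mul_right (arcsin (w * x) / x)
    rw [sin_arcsin hlo hhi, show 2 * R * (w * x) / (1 - R ^ 2) = v * x by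
      field_simp; linear_combination -x * hv] at hs
    simpa only [mul_assoc, mul_div_assoc] using hs

section ExpForm

open Complex

variable {θ : ℝ} {S : ℂ}

lemma ofReal_mulCosPrimitive_sub (hS : S = exp (θ * I)) (m : ℕ) :
    ((mulCosPrimitive (2 * m + 1 : ℕ) θ - mulCosPrimitive (2 * m + 1 : ℕ) 0 : ℝ) : ℂ)
      = -I * θ / 2 * oddPowTerm 1 S m + I * θ / 2 * oddPowTerm 1 (1 / S) m
        + oddPowTerm 2 S m / 2 + oddPowTerm 2 (1 / S) m / 2 - oddPowTerm 2 1 m := by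
  have hpow : S ^ (2 * m + 1) = exp (((2 * m + 1 : ℕ) * θ : ℝ) * I) := by
    rw [hS, ← Complex.exp_nat_mul]; push_cast; ring_nf
  have hinv : (1 / S) ^ (2 * m + 1) = exp (-(((2 * m + 1 : ℕ) * θ : ℝ) * I)) := by
    rw [one_div_pow, hpow, Complex.exp_neg, one_div]
  simp only [mulCosPrimitive, oddPowTerm, hpow, hinv, one_pow]
  rw [← neg_mul, exp_mul_I, exp_mul_I, Complex.cos_neg, Complex.sin_neg]
  push_cast
  simp only [mul_zero, Complex.sin_zero, Complex.cos_zero, zero_div, zero_add, pow_one]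
  field_simp
  congr 1
  linear_combination (2 * θ * (2 * m + 1) * Complex.sin (θ * (2 * m + 1))) * I_sq

lemma ofReal_dirichletPrimitive_sub (hS : S = exp (θ * I)) (n : ℕ) :
    ((dirichletPrimitive n θ - dirichletPrimitive n 0 : ℝ) : ℂ)
      = 2 * ∑ m ∈ Finset.range (n + 1), (-I * θ / 2 * oddPowTerm 1 S m
          + I * θ / 2 * oddPowTerm 1 (1 / S) m + oddPowTerm 2 S m / 2
          + oddPowTerm 2 (1 / S) m / 2 - oddPowTerm 2 1 m)
        - (-I * θ / 2 * oddPowTerm 1 S n + I * θ / 2 * oddPowTerm 1 (1 / S) n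
          + oddPowTerm 2 S n / 2 + oddPowTerm 2 (1 / S) n / 2 - oddPowTerm 2 1 n) := by
  simp only [← ofReal_mulCosPrimitive_sub hS]
  push_cast [dirichletPrimitive, Finset.sum_sub_distrib]
  ring

lemma hasSum_polylog_combination {R : ℝ} (hR : |R| < 1) (hS : S = exp (θ * I)) :
    HasSum (fun n : ℕ => ((2 * R ^ (2 * n + 1) / ((2 * n + 1 : ℕ) : ℝ)
        * (dirichletPrimitive n θ - dirichletPrimitive n 0) : ℝ) : ℂ))
      (2 * Fc 3 (R : ℂ) - Fc 3 ((R : ℂ) * S) - Fc 3 ((R : ℂ) / S)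
        - 4 * Fcc 1 2 (R : ℂ) 1 + 2 * Fcc 1 2 (R : ℂ) S + 2 * Fcc 1 2 (R : ℂ) (1 / S)
        + I * θ * (Fc 2 ((R : ℂ) * S) - Fc 2 ((R : ℂ) / S)
            - 2 * Fcc 1 1 (R : ℂ) S + 2 * Fcc 1 1 (R : ℂ) (1 / S))) := by
  have hS1 : ‖S‖ = 1 := by rw [hS, norm_exp_ofReal_mul_I]
  have hS1' : ‖1 / S‖ = 1 := by rw [norm_div, hS1, norm_one, div_one]
  have hR1 : ‖(R : ℂ)‖ < 1 := by rwa [norm_real, Real.norm_eq_abs]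
  have hRS : ‖(R : ℂ) * S‖ < 1 := by rwa [norm_mul, hS1, mul_one]
  have hRS' : ‖(R : ℂ) / S‖ < 1 := by rwa [norm_div, hS1, div_one]
  have h := (((((((hasSum_Fc 3 hR1).mul_left 2).sub (hasSum_Fc 3 hRS)).sub
    (hasSum_Fc 3 hRS')).sub ((hasSum_Fcc 1 2 hR1 norm_one.le).mul_left 4)).add
    ((hasSum_Fcc 1 2 hR1 hS1.le).mul_left 2)).add ((hasSum_Fcc 1 2 hR1 hS1'.le).mul_left 2)).add
    (((((hasSum_Fc 2 hRS).sub (hasSum_Fc 2 hRS')).sub ((hasSum_Fcc 1 1 hR1 hS1.le).mul_left 2)).add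
      ((hasSum_Fcc 1 1 hR1 hS1'.le).mul_left 2)).mul_left (I * θ))
  refine h.congr_fun fun n => ?_
  have hcoef : ((2 * R ^ (2 * n + 1) / ((2 * n + 1 : ℕ) : ℝ) : ℝ) : ℂ)
      = 2 * oddPowTerm 1 R n := by
    push_cast [oddPowTerm]; ring
  have h3 (y : ℂ) : oddPowTerm 3 (R * y) n = oddPowTerm 1 R n * oddPowTerm 2 y n :=
    (oddPowTerm_mul 1 2 _ _ n).symm
  have h2 (y : ℂ) : oddPowTerm 2 (R * y) n = oddPowTerm 1 R n * oddPowTerm 1 y n :=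
    (oddPowTerm_mul 1 1 _ _ n).symm
  rw [Complex.ofReal_mul, hcoef, ofReal_dirichletPrimitive_sub hS, div_eq_mul_one_div (R : ℂ) S,
    h3, h3, h2, h2,
    show oddPowTerm 3 R n = oddPowTerm 1 R n * oddPowTerm 2 1 n by rw [← h3, mul_one]]
  simp only [Finset.sum_add_distrib, Finset.sum_sub_distrib, ← Finset.mul_sum, ← Finset.sum_div]
  ring

end ExpForm

lemma abs_div_one_add_sqrt_one_add_sq_lt_one (u : ℝ) : |u / (1 + √(1 + u ^ 2))| < 1 := by
  have hu : |u| < 1 + √(1 + u ^ 2) := by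
    rw [← Real.sqrt_sq_eq_abs]
    linarith [Real.sqrt_le_sqrt (show u ^ 2 ≤ 1 + u ^ 2 by linarith)]
  have hpos : 0 < 1 + √(1 + u ^ 2) := by positivity
  rwa [abs_div, abs_of_pos hpos, div_lt_one hpos]

lemma mul_one_sub_sq_div_one_add_sqrt (u : ℝ) :
    u * (1 - (u / (1 + √(1 + u ^ 2))) ^ 2) = 2 * (u / (1 + √(1 + u ^ 2))) := by
  have hs : √(1 + u ^ 2) ^ 2 = 1 + u ^ 2 := Real.sq_sqrt (by positivity)
  have hne : 1 + √(1 + u ^ 2) ≠ 0 := by positivity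
  field_simp
  linear_combination u * hs

theorem TS_eq_multiple_polylogs (v w : ℝ) (hw : w ∈ Set.Icc (-1 : ℝ) 1) (hw0 : w ≠ 0)
    (R : ℝ) (hR : R = (v / w) / (1 + Real.sqrt (1 + (v / w) ^ 2)))
    (S : ℂ) (hS : S = Complex.I * (w : ℂ) + (Real.sqrt (1 - w ^ 2) : ℝ)) :
    (TS v w : ℂ) =
      2 * Fc 3 (R : ℂ) - Fc 3 ((R : ℂ) * S) - Fc 3 ((R : ℂ) / S)
        - 4 * Fcc 1 2 (R : ℂ) 1 + 2 * Fcc 1 2 (R : ℂ) S + 2 * Fcc 1 2 (R : ℂ) (1 / S)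
        + Complex.I * (Real.arcsin w : ℂ) *
          (Fc 2 ((R : ℂ) * S) - Fc 2 ((R : ℂ) / S)
            - 2 * Fcc 1 1 (R : ℂ) S + 2 * Fcc 1 1 (R : ℂ) (1 / S)) := by
  obtain ⟨hw1, hw2⟩ := hw
  have hR1 : |R| < 1 := hR ▸ abs_div_one_add_sqrt_one_add_sq_lt_one (v / w)
  have hv : v * (1 - R ^ 2) = 2 * R * w := by
    have h := mul_one_sub_sq_div_one_add_sqrt (v / w)
    rw [← hR, div_mul_eq_mul_div, div_eq_iff hw0] at h
    linear_combination h
  have hS_exp : S = Complex.exp (arcsin w * Complex.I) := by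
    rw [hS, Complex.exp_mul_I, ← Complex.ofReal_cos, ← Complex.ofReal_sin, cos_arcsin,
      sin_arcsin hw1 hw2]
    ring
  exact (Complex.hasSum_ofReal.mpr (hasSum_TS (abs_le.mpr ⟨hw1, hw2⟩) hR1 hv)).unique
    (hasSum_polylog_combination hR1 hS_exp)
end

section
/- For all real numbers x, y with 0 ≤ x < 1 and 0 ≤ y ≤ 1, 4·F_{1,1}(x,y) = li₂( x(1+y)/(1+x) ) − li₂( x(1−y)/(1+x) ) − li₂( −x(1+y)/(1−x) ) + li₂( −x(1−y)/(1−x) ). -/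
open Real MeasureTheory intervalIntegral

/-- `F_{1,1}(x,y) = ∑_{n≥0} (x^(2n+1)/(2n+1)) ∑_{m=0}^n y^(2m+1)/(2m+1)` (real). -/
noncomputable def F11 (x y : ℝ) : ℝ :=
  ∑' n : ℕ, (x ^ (2 * n + 1) / ((2 * n + 1 : ℕ) : ℝ)) *
    ∑ m ∈ Finset.range (n + 1), y ^ (2 * m + 1) / ((2 * m + 1 : ℕ) : ℝ)

/-- The dilogarithm for real arguments `z < 1`: `li₂(z) = −∫₀¹ log(1 − z t)/t dt`. -/
noncomputable def li2 (z : ℝ) : ℝ := -∫ t in (0:ℝ)..1, Real.log (1 - z * t) / t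

/-!
Both sides vanish at `x = 0`, so it suffices to compare their `x`-derivatives on `(-1, 1)`.
Differentiating termwise, `∂ₓ F₁₁(x, y) = ∑ₙ x^(2n) ∑_{m ≤ n} y^(2m+1)/(2m+1)` is the Cauchy
product of `∑ x^(2k) = 1/(1 - x²)` with `∑ x^(2m) y^(2m+1)/(2m+1) = artanh(xy)/x`.
On the other side `li₂'(z) = -log(1 - z)/z`, so for a Möbius argument `z = x c/(1 + a x)` the
chain rule gives `(log(1 + a x) - log(1 + (a - c) x))/(x (1 + a x))`; in the signed sum of the
four terms the `log(1 ± x)` contributions cancel, leaving `4 artanh(xy)/(x (1 - x²))`.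
-/

open Set

noncomputable def li2Deriv : ℝ → ℝ := dslope (fun u => -log (1 - u)) 0

lemma hasDerivAt_neg_log_one_sub {u : ℝ} (hu : u < 1) :
    HasDerivAt (fun u => -log (1 - u)) (1 - u)⁻¹ u := by
  have h := ((hasDerivAt_id' u).const_sub 1).log (sub_ne_zero.2 hu.ne')
  exact h.fun_neg.congr_deriv (by ring)

lemma li2Deriv_zero : li2Deriv 0 = 1 := by
  simpa [li2Deriv, dslope_same] using (hasDerivAt_neg_log_one_sub zero_lt_one).deriv

lemma li2Deriv_of_ne_zero {u : ℝ} (hu : u ≠ 0) : li2Deriv u = -log (1 - u) / u := by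
  simp [li2Deriv, dslope_of_ne _ hu, slope_def_field]

lemma continuousAt_li2Deriv {u : ℝ} (hu : u < 1) : ContinuousAt li2Deriv u := by
  have hdiff := (hasDerivAt_neg_log_one_sub hu).differentiableAt
  rcases eq_or_ne u 0 with rfl | hu0
  · exact continuousAt_dslope_same.2 hdiff
  · exact (continuousAt_dslope_of_ne hu0).2 hdiff.continuousAt

lemma li2_eq_integral_li2Deriv (z : ℝ) : li2 z = ∫ u in (0:ℝ)..z, li2Deriv u := by
  rcases eq_or_ne z 0 with rfl | hz
  · simp [li2]
  have hscale : (fun t => log (1 - z * t) / t) = fun t => z * (log (1 - z * t) / (z * t)) := by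
    funext t
    rcases eq_or_ne t 0 with rfl | ht
    · simp
    · field_simp
  rw [li2, hscale, intervalIntegral.integral_const_mul,
    integral_comp_mul_left (fun u => log (1 - u) / u) hz, mul_zero, mul_one, smul_eq_mul,
    ← mul_assoc, mul_inv_cancel₀ hz, one_mul, ← intervalIntegral.integral_neg]
  refine integral_congr_ae ?_
  filter_upwards [Measure.ae_ne volume (0:ℝ)] with u hu _
  rw [li2Deriv_of_ne_zero hu, neg_div]

lemma hasDerivAt_li2 {z : ℝ} (hz : z < 1) : HasDerivAt li2 (li2Deriv z) z := by
  have hcont : ContinuousOn li2Deriv (Iio 1) := fun u hu =>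
    (continuousAt_li2Deriv hu).continuousWithinAt
  rw [funext li2_eq_integral_li2Deriv]
  refine integral_hasDerivAt_right ((hcont.mono fun u hu => ?_).intervalIntegrable)
    (hcont.stronglyMeasurableAtFilter isOpen_Iio _ hz) (continuousAt_li2Deriv hz)
  rcases mem_uIcc.1 hu with ⟨_, h⟩ | ⟨_, h⟩
  · exact h.trans_lt hz
  · exact h.trans_lt one_pos

lemma hasDerivAt_li2_comp_mobius {φ : ℝ → ℝ} {a c s : ℝ} (hφ : φ = fun s => s * c / (1 + a * s))
    (ha : 0 < 1 + a * s) (hac : 0 < 1 + (a - c) * s) :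
    HasDerivAt (fun s => li2 (φ s)) (li2Deriv (s * c / (1 + a * s)) * (c / (1 + a * s) ^ 2)) s := by
  subst hφ
  have hlt : s * c / (1 + a * s) < 1 := by
    rw [div_lt_one ha]
    linarith
  have hmob : HasDerivAt (fun s => s * c / (1 + a * s)) (c / (1 + a * s) ^ 2) s := by
    have h := ((hasDerivAt_id' s).mul_const c).div (((hasDerivAt_id' s).const_mul a).const_add 1)
      ha.ne'
    exact h.congr_deriv (by ring)
  exact HasDerivAt.comp (h₂ := li2) s (hasDerivAt_li2 hlt) hmob

lemma li2Deriv_mobius_mul {a c s : ℝ} (hs : s ≠ 0) (ha : 0 < 1 + a * s)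
    (hac : 0 < 1 + (a - c) * s) :
    li2Deriv (s * c / (1 + a * s)) * (c / (1 + a * s) ^ 2)
      = (log (1 + a * s) - log (1 + (a - c) * s)) / (s * (1 + a * s)) := by
  rcases eq_or_ne c 0 with rfl | hc
  · simp
  have hz : s * c / (1 + a * s) ≠ 0 := div_ne_zero (mul_ne_zero hs hc) ha.ne'
  have hsub : 1 - s * c / (1 + a * s) = (1 + (a - c) * s) / (1 + a * s) := by
    rw [eq_div_iff ha.ne', sub_mul, div_mul_cancel₀ _ ha.ne']
    ring
  rw [li2Deriv_of_ne_zero hz, hsub, log_div hac.ne' ha.ne']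
  field_simp
  ring

noncomputable def partialArtanh (y : ℝ) (n : ℕ) : ℝ :=
  ∑ m ∈ Finset.range (n + 1), y ^ (2 * m + 1) / ((2 * m + 1 : ℕ) : ℝ)

lemma abs_pow_odd_div_le_one {y : ℝ} (hy : |y| ≤ 1) (m : ℕ) :
    |y ^ (2 * m + 1) / ((2 * m + 1 : ℕ) : ℝ)| ≤ 1 := by
  rw [abs_div, abs_pow, Nat.abs_cast]
  exact div_le_one_of_le₀ ((pow_le_one₀ (abs_nonneg y) hy).trans (by norm_cast; omega))
    (Nat.cast_nonneg _)

lemma abs_partialArtanh_le {y : ℝ} (hy : |y| ≤ 1) (n : ℕ) : |partialArtanh y n| ≤ n + 1 := by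
  calc |partialArtanh y n|
      ≤ ∑ m ∈ Finset.range (n + 1), |y ^ (2 * m + 1) / ((2 * m + 1 : ℕ) : ℝ)| :=
        Finset.abs_sum_le_sum_abs _ _
    _ ≤ ∑ _m ∈ Finset.range (n + 1), (1 : ℝ) :=
        Finset.sum_le_sum fun m _ => abs_pow_odd_div_le_one hy m
    _ = n + 1 := by simp

lemma summable_succ_mul_geometric {r : ℝ} (hr : |r| < 1) :
    Summable fun n : ℕ => ((n : ℝ) + 1) * |r| ^ n := by
  have hr' : ‖|r|‖ < 1 := by rwa [norm_of_nonneg (abs_nonneg r)]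
  refine ((summable_pow_mul_geometric_of_norm_lt_one 1 hr').add
    (summable_geometric_of_lt_one (abs_nonneg r) hr)).congr fun n => ?_
  ring

/-- The Cauchy product of `∑ t^(2m) y^(2m+1)/(2m+1) = artanh(t y)/t` with `∑ t^(2k) = 1/(1-t²)`. -/
lemma hasSum_pow_mul_partialArtanh {t y : ℝ} (ht0 : t ≠ 0) (ht : |t| < 1) (hy : |y| ≤ 1) :
    HasSum (fun n => t ^ (2 * n) * partialArtanh y n)
      ((log (1 + t * y) - log (1 - t * y)) / (2 * t) / (1 - t ^ 2)) := by
  set f : ℕ → ℝ := fun m => t ^ (2 * m) * (y ^ (2 * m + 1) / ((2 * m + 1 : ℕ) : ℝ))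
  set g : ℕ → ℝ := fun k => (t ^ 2) ^ k
  have ht2 : |t ^ 2| < 1 := by
    rw [abs_pow]; exact pow_lt_one₀ (abs_nonneg t) ht two_ne_zero
  have hg : HasSum g (1 - t ^ 2)⁻¹ := hasSum_geometric_of_abs_lt_one ht2
  have hty : |t * y| < 1 := by
    rw [abs_mul]; exact mul_lt_one_of_nonneg_of_lt_one_left (abs_nonneg t) ht hy
  have hf : HasSum f ((log (1 + t * y) - log (1 - t * y)) / (2 * t)) := by
    refine ((hasSum_log_sub_log_of_abs_lt_one hty).div_const (2 * t)).congr_fun fun m => ?_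
    simp only [f]
    push_cast
    field_simp
    ring
  have hf_norm : Summable fun m => ‖f m‖ := by
    refine (summable_geometric_of_lt_one (abs_nonneg _) ht2).of_nonneg_of_le
      (fun _ => norm_nonneg _) fun m => ?_
    rw [norm_mul, norm_pow, Real.norm_eq_abs, Real.norm_eq_abs, abs_pow, pow_mul]
    exact mul_le_of_le_one_right (by positivity) (abs_pow_odd_div_le_one hy m)
  have hg_norm : Summable fun k => ‖g k‖ := hg.summable.abs
  have hprod := hasSum_sum_range_mul_of_summable_norm hf_norm hg_norm
  rw [hf.tsum_eq, hg.tsum_eq, ← div_eq_mul_inv] at hprod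
  refine hprod.congr_fun fun n => ?_
  rw [partialArtanh, Finset.mul_sum]
  refine Finset.sum_congr rfl fun m hm => ?_
  have hmn : m ≤ n := Nat.lt_succ_iff.1 (Finset.mem_range.1 hm)
  simp only [f, g]
  rw [← pow_mul, mul_right_comm, ← pow_add]
  congr 2
  omega

lemma hasDerivAt_F11 {t y : ℝ} (ht : |t| < 1) (hy : |y| ≤ 1) :
    HasDerivAt (fun s => F11 s y) (∑' n, t ^ (2 * n) * partialArtanh y n) t := by
  obtain ⟨r, htr, hr⟩ := exists_between ht
  have hr0 : 0 < r := (abs_nonneg t).trans_lt htr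
  have hr2 : |r ^ 2| < 1 := by
    rw [abs_pow, abs_of_pos hr0]; exact pow_lt_one₀ hr0.le hr two_ne_zero
  refine hasDerivAt_tsum_of_isPreconnected
    (g := fun n s => s ^ (2 * n + 1) / ((2 * n + 1 : ℕ) : ℝ) * partialArtanh y n)
    (g' := fun n s => s ^ (2 * n) * partialArtanh y n) (summable_succ_mul_geometric hr2)
    isOpen_Ioo isPreconnected_Ioo (fun n s _ => ?_) (fun n s hs => ?_) (y₀ := 0)
    ⟨neg_neg_of_pos hr0, hr0⟩ (by simp) (abs_lt.1 htr)
  · have h := ((hasDerivAt_pow (2 * n + 1) s).div_const ((2 * n + 1 : ℕ) : ℝ)).mul_const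
      (partialArtanh y n)
    refine h.congr_deriv ?_
    rw [Nat.add_sub_cancel, mul_div_cancel_left₀ _ (by positivity)]
  · rw [norm_mul, norm_pow, Real.norm_eq_abs, Real.norm_eq_abs, pow_mul, mul_comm]
    refine mul_le_mul (abs_partialArtanh_le hy n) (pow_le_pow_left₀ (by positivity) ?_ n)
      (by positivity) (by positivity)
    rw [abs_pow, abs_of_pos hr0]
    exact pow_le_pow_left₀ (abs_nonneg s) (abs_le.2 ⟨hs.1.le, hs.2.le⟩) 2

noncomputable def dilogCombination (x y : ℝ) : ℝ :=
  li2 (x * (1 + y) / (1 + x)) - li2 (x * (1 - y) / (1 + x))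
    - li2 (-(x * (1 + y)) / (1 - x)) + li2 (-(x * (1 - y)) / (1 - x))

lemma hasDerivAt_dilogCombination {t y : ℝ} (ht : |t| < 1) (hy : |y| ≤ 1) :
    HasDerivAt (fun s => dilogCombination s y) (4 * ∑' n, t ^ (2 * n) * partialArtanh y n) t := by
  obtain ⟨ht₁, ht₂⟩ := abs_lt.1 ht
  have hty : |t * y| < 1 := by
    rw [abs_mul]; exact mul_lt_one_of_nonneg_of_lt_one_left (abs_nonneg t) ht hy
  obtain ⟨hty₁, hty₂⟩ := abs_lt.1 hty
  have h1 := hasDerivAt_li2_comp_mobius (φ := fun s => s * (1 + y) / (1 + s)) (a := 1)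
    (c := 1 + y) (s := t) (funext fun s => by ring) (by linarith) (by linarith)
  have h2 := hasDerivAt_li2_comp_mobius (φ := fun s => s * (1 - y) / (1 + s)) (a := 1)
    (c := 1 - y) (s := t) (funext fun s => by ring) (by linarith) (by linarith)
  have h3 := hasDerivAt_li2_comp_mobius (φ := fun s => -(s * (1 + y)) / (1 - s)) (a := -1)
    (c := -(1 + y)) (s := t) (funext fun s => by ring) (by linarith) (by linarith)
  have h4 := hasDerivAt_li2_comp_mobius (φ := fun s => -(s * (1 - y)) / (1 - s)) (a := -1)
    (c := -(1 - y)) (s := t) (funext fun s => by ring) (by linarith) (by linarith)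
  refine (((h1.sub h2).sub h3).add h4).congr_deriv ?_
  rcases eq_or_ne t 0 with rfl | ht0
  · rw [tsum_eq_single 0 fun n hn => by simp [hn]]
    simp [li2Deriv_zero, partialArtanh]
    ring
  rw [li2Deriv_mobius_mul ht0 (by linarith) (by linarith),
    li2Deriv_mobius_mul ht0 (by linarith) (by linarith),
    li2Deriv_mobius_mul ht0 (by linarith) (by linarith),
    li2Deriv_mobius_mul ht0 (by linarith) (by linarith),
    (hasSum_pow_mul_partialArtanh ht0 ht hy).tsum_eq]
  have hp : 1 + t ≠ 0 := by linarith
  have hm : 1 - t ≠ 0 := by linarith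
  have hpm : 1 - t ^ 2 ≠ 0 := by nlinarith
  ring_nf
  field_simp
  ring

theorem F11_closed_form (x y : ℝ) (hx0 : 0 ≤ x) (hx1 : x < 1)
    (hy0 : 0 ≤ y) (hy1 : y ≤ 1) :
    4 * F11 x y =
      li2 (x * (1 + y) / (1 + x)) - li2 (x * (1 - y) / (1 + x))
        - li2 (-(x * (1 + y)) / (1 - x)) + li2 (-(x * (1 - y)) / (1 - x)) := by
  have hy : |y| ≤ 1 := abs_le.2 ⟨by linarith, hy1⟩
  have hderiv : ∀ t ∈ Ioo (-1 : ℝ) 1, HasDerivAt (fun s => 4 * F11 s y)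
      (4 * ∑' n, t ^ (2 * n) * partialArtanh y n) t ∧
      HasDerivAt (fun s => dilogCombination s y) (4 * ∑' n, t ^ (2 * n) * partialArtanh y n) t :=
    fun t ht => ⟨(hasDerivAt_F11 (abs_lt.2 ht) hy).const_mul 4,
      hasDerivAt_dilogCombination (abs_lt.2 ht) hy⟩
  refine isOpen_Ioo.eqOn_of_deriv_eq isPreconnected_Ioo
    (fun t ht => (hderiv t ht).1.differentiableAt.differentiableWithinAt)
    (fun t ht => (hderiv t ht).2.differentiableAt.differentiableWithinAt)
    (fun t ht => (hderiv t ht).1.deriv.trans (hderiv t ht).2.deriv.symm)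
    (x := 0) ⟨by norm_num, by norm_num⟩ ?_ ⟨by linarith, hx1⟩
  simp [F11, dilogCombination, li2]
end

section
/- For every real number v with |v| ≤ 1, setting r = v/(1 + √(1 + v²)), one has ∑_{k=0}^∞ (−1)^k (2v)^{2k+1} / ((2k+1)² · binom(2k,k)) = 4 ∑_{k=0}^∞ r^{2k+1}/(2k+1)² = 2·Li₂(r) − 2·Li₂(−r). -/
open Real

/-- The dilogarithm `Li₂(z) = ∑_{n≥1} zⁿ/n²` (real). -/
noncomputable def Li2 (z : ℝ) : ℝ := ∑' n : ℕ, z ^ (n + 1) / ((n + 1 : ℕ) : ℝ) ^ 2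

namespace H2Aux

lemma sixteen_pow_le (k : ℕ) : (16:ℕ)^k ≤ (4*k+1) * ((2*k).choose k)^2 := by
  induction k with
  | zero => simp
  | succ k ih =>
    have h := Nat.succ_mul_centralBinom_succ k
    rw [Nat.centralBinom, Nat.centralBinom] at h
    have hpos : 0 < (k+1)^2 := by positivity
    refine Nat.le_of_mul_le_mul_left ?_ hpos
    calc (k+1)^2 * 16^(k+1) = (16*(k+1)^2) * 16^k := by ring
    _ ≤ (16*(k+1)^2) * ((4*k+1) * ((2*k).choose k)^2) := Nat.mul_le_mul_left _ ih
    _ = (16*(k+1)^2*(4*k+1)) * ((2*k).choose k)^2 := by ring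
    _ ≤ (4*(4*(k+1)+1)*(2*k+1)^2) * ((2*k).choose k)^2 := by
        exact Nat.mul_le_mul_right _ (by nlinarith)
    _ = (4*(k+1)+1) * (2*(2*k+1)*((2*k).choose k))^2 := by ring
    _ = (4*(k+1)+1) * ((k+1) * ((2*(k+1)).choose (k+1)))^2 := by
        rw [show 2*(2*k+1)*((2*k).choose k) = (k+1) * ((2*(k+1)).choose (k+1)) from by omega]
    _ = (k+1)^2 * ((4*(k+1)+1) * ((2*(k+1)).choose (k+1))^2) := by ring

noncomputable def tt (n k : ℕ) : ℝ :=
  (-1)^k * 16^k * ((n+k).choose (2*k)) / ((2*(k:ℝ)+1)^2 * ((2*k).choose k))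

noncomputable def gg (n : ℕ) : ℕ → ℝ
  | 0 => 0
  | (j+1) => (-1)^j * 16^(j+1) * ((n+j+1).choose (2*j+1)) / ((2*j+2).choose (j+1))

lemma key (n k : ℕ) (hk : k ≤ n+1) :
    (2*(n:ℝ)+3)^2 * tt (n+1) k - (2*(n:ℝ)+1)^2 * tt n k = gg n (k+1) - gg n k := by
  match k with
  | 0 =>
    simp only [tt, gg]
    norm_num [Nat.choose_one_right]
    push_cast
    ring
  | (j+1) =>
    have hd0 : (((2*j+2).choose (j+1) : ℕ) : ℝ) ≠ 0 := by
      exact_mod_cast (Nat.choose_pos (by omega)).ne'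
    by_cases hj : j + 1 ≤ n
    · -- main case 1 ≤ k ≤ n
      have hb : (((n+j+1).choose (2*j+2) : ℕ) : ℝ) * (2*(j:ℝ)+2)
          = (((n+j+1).choose (2*j+1) : ℕ) : ℝ) * ((n:ℝ) - j) := by
        have h := Nat.choose_succ_right_eq (n+j+1) (2*j+1)
        rw [show n+j+1-(2*j+1) = n-j by omega, show 2*j+1+1 = 2*j+2 by omega] at h
        have h' := congrArg (Nat.cast (R := ℝ)) h
        push_cast [Nat.cast_sub (show j ≤ n by omega)] at h'
        linarith [h']
      have hc : (((n+j+1).choose (2*j+3) : ℕ) : ℝ) * (2*(j:ℝ)+3)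
          = (((n+j+1).choose (2*j+2) : ℕ) : ℝ) * ((n:ℝ) - j - 1) := by
        have h := Nat.choose_succ_right_eq (n+j+1) (2*j+2)
        rw [show n+j+1-(2*j+2) = n-(j+1) by omega, show 2*j+2+1 = 2*j+3 by omega] at h
        have h' := congrArg (Nat.cast (R := ℝ)) h
        push_cast [Nat.cast_sub (show j+1 ≤ n from hj)] at h'
        linarith [h']
      have hp1 : (((n+j+2).choose (2*j+2) : ℕ) : ℝ)
          = (((n+j+1).choose (2*j+1) : ℕ) : ℝ) + (((n+j+1).choose (2*j+2) : ℕ) : ℝ) := by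
        have h := Nat.choose_succ_succ' (n+j+1) (2*j+1)
        rw [show 2*j+1+1 = 2*j+2 by omega] at h
        exact_mod_cast congrArg (Nat.cast (R := ℝ)) h
      have hp2 : (((n+j+2).choose (2*j+3) : ℕ) : ℝ)
          = (((n+j+1).choose (2*j+2) : ℕ) : ℝ) + (((n+j+1).choose (2*j+3) : ℕ) : ℝ) := by
        have h := Nat.choose_succ_succ' (n+j+1) (2*j+2)
        rw [show 2*j+2+1 = 2*j+3 by omega] at h
        exact_mod_cast congrArg (Nat.cast (R := ℝ)) h
      have hd : ((j:ℝ)+2) * (((2*j+4).choose (j+2) : ℕ) : ℝ)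
          = 2*(2*(j:ℝ)+3) * (((2*j+2).choose (j+1) : ℕ) : ℝ) := by
        have h := Nat.succ_mul_centralBinom_succ (j+1)
        rw [Nat.centralBinom, Nat.centralBinom,
          show 2*(j+1+1) = 2*j+4 by omega, show j+1+1 = j+2 by omega,
          show 2*(j+1) = 2*j+2 by omega] at h
        have h' := congrArg (Nat.cast (R := ℝ)) h
        push_cast at h'
        linarith [h']
      have he0 : (((2*j+4).choose (j+2) : ℕ) : ℝ) ≠ 0 := by
        exact_mod_cast (Nat.choose_pos (by omega)).ne'
      simp only [tt, gg]
      simp only [show n+1+(j+1) = n+j+2 from by omega, show n+(j+1) = n+j+1 from by omega,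
        show 2*(j+1) = 2*j+2 from by omega, show n+j+1+1 = n+j+2 from by omega,
        show 2*j+2+1 = 2*j+3 from by omega, show 2*j+2+2 = 2*j+4 from by omega,
        show j+1+1 = j+2 from by omega]
      rw [hp1, hp2]
      have hb' : (((n+j+1).choose (2*j+2) : ℕ) : ℝ)
          = (((n+j+1).choose (2*j+1) : ℕ) : ℝ) * ((n:ℝ) - j) / (2*(j:ℝ)+2) := by
        field_simp at hb ⊢; linarith [hb]
      have hc' : (((n+j+1).choose (2*j+3) : ℕ) : ℝ)
          = (((n+j+1).choose (2*j+2) : ℕ) : ℝ) * ((n:ℝ) - j - 1) / (2*(j:ℝ)+3) := by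
        field_simp at hc ⊢; linarith [hc]
      have he' : (((2*j+4).choose (j+2) : ℕ) : ℝ)
          = 2*(2*(j:ℝ)+3) * (((2*j+2).choose (j+1) : ℕ) : ℝ) / ((j:ℝ)+2) := by
        field_simp at hd ⊢; linarith [hd]
      rw [hc', hb', he']
      push_cast
      field_simp
      ring
    · -- case k = n+1
      have hjn : j = n := by omega
      subst hjn
      simp only [tt, gg]
      simp only [show j+1+(j+1) = 2*j+2 from by omega, show 2*(j+1) = 2*j+2 from by omega,
        show j+(j+1) = 2*j+1 from by omega, show j+j+1+1 = 2*j+2 from by omega,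
        show 2*(j+1)+1 = 2*j+3 from by omega, show j+j+1 = 2*j+1 from by omega,
        show 2*(j+1)+2 = 2*j+4 from by omega, show j+1+1 = j+2 from by omega,
        show 2*j+1+1 = 2*j+2 from by omega, show 2*j+2+1 = 2*j+3 from by omega,
        show 2*j+2+2 = 2*j+4 from by omega, show j+j+2 = 2*j+2 from by omega]
      rw [Nat.choose_self, Nat.choose_eq_zero_of_lt (by omega : 2*j+1 < 2*j+2),
        Nat.choose_eq_zero_of_lt (by omega : 2*j+2 < 2*j+3), Nat.choose_self]
      push_cast
      field_simp
      ring

lemma tt_top (n : ℕ) : tt n (n+1) = 0 := by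
  simp [tt, Nat.choose_eq_zero_of_lt (show n+(n+1) < 2*(n+1) by omega)]

lemma gg_top (n : ℕ) : gg n (n+2) = 0 := by
  show (-1:ℝ)^(n+1) * 16^(n+1+1) * ((n+(n+1)+1).choose (2*(n+1)+1)) / ((2*(n+1)+2).choose (n+1+1)) = 0
  rw [Nat.choose_eq_zero_of_lt (show n+(n+1)+1 < 2*(n+1)+1 by omega)]
  simp

lemma key_sum (n : ℕ) : (2*(n:ℝ)+1)^2 * ∑ k ∈ Finset.range (n+1), tt n k = 1 := by
  induction n with
  | zero => norm_num [tt]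
  | succ n ih =>
    have h1 : ∑ k ∈ Finset.range (n+2), tt n k = ∑ k ∈ Finset.range (n+1), tt n k := by
      rw [Finset.sum_range_succ, tt_top, add_zero]
    have tel : ∑ k ∈ Finset.range (n+2), ((2*(n:ℝ)+3)^2 * tt (n+1) k - (2*(n:ℝ)+1)^2 * tt n k)
        = ∑ k ∈ Finset.range (n+2), (gg n (k+1) - gg n k) := by
      refine Finset.sum_congr rfl (fun k hk => key n k ?_)
      simp only [Finset.mem_range] at hk; omega
    rw [Finset.sum_range_sub (gg n)] at tel
    rw [Finset.sum_sub_distrib, ← Finset.mul_sum, ← Finset.mul_sum, h1, ih] at tel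
    have hgg0 : gg n 0 = 0 := rfl
    rw [hgg0, gg_top, sub_zero] at tel
    have h2 : ((↑(n+1):ℝ)) = (n:ℝ)+1 := by push_cast; ring
    rw [h2]
    have h3 : (2*((n:ℝ)+1)+1)^2 = (2*(n:ℝ)+3)^2 := by ring
    rw [h3]
    linarith [tel]

lemma tt_sum (n : ℕ) : ∑ k ∈ Finset.range (n+1), tt n k = 1/(2*(n:ℝ)+1)^2 := by
  have h := key_sum n
  have hne : (2*(n:ℝ)+1)^2 ≠ 0 := by positivity
  field_simp
  linarith [h]

lemma stepA (x w : ℝ) (hx : x^2 < 1) (hw : w * (1 - x^2) = 2*x) (k : ℕ) :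
    HasSum (fun n : ℕ => if k ≤ n then
      (-1:ℝ)^k * 4^(2*k+1) * (((n+k).choose (2*k) : ℕ) : ℝ)
        / ((2*(k:ℝ)+1)^2 * (((2*k).choose k : ℕ) : ℝ)) * x^(2*n+1) else 0)
    ((-1)^k * (2*w)^(2*k+1) / ((2*(k:ℝ)+1)^2 * (((2*k).choose k : ℕ) : ℝ))) := by
  have hnz : (1:ℝ) - x^2 ≠ 0 := by nlinarith [sq_nonneg x]
  have hC : (((2*k).choose k : ℕ) : ℝ) ≠ 0 := by
    exact_mod_cast (Nat.choose_pos (by omega : k ≤ 2*k)).ne'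
  have hx2 : ‖x^2‖ < 1 := by
    rw [Real.norm_eq_abs, abs_of_nonneg (sq_nonneg x)]; exact hx
  have base := hasSum_choose_mul_geometric_of_norm_lt_one (𝕜 := ℝ) (2*k) hx2
  set c : ℝ := (-1:ℝ)^k * 4^(2*k+1) * x^(2*k+1) / ((2*(k:ℝ)+1)^2 * (((2*k).choose k : ℕ) : ℝ)) with hc
  have base2 := base.mul_left c
  have hcomp : ((fun n : ℕ => if k ≤ n then
      (-1:ℝ)^k * 4^(2*k+1) * (((n+k).choose (2*k) : ℕ) : ℝ)
        / ((2*(k:ℝ)+1)^2 * (((2*k).choose k : ℕ) : ℝ)) * x^(2*n+1) else 0) ∘ (fun j => k + j))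
      = fun j : ℕ => c * ((((j + 2*k).choose (2*k) : ℕ) : ℝ) * (x^2)^j) := by
    funext j
    simp only [Function.comp_apply, if_pos (by omega : k ≤ k + j)]
    rw [show k + j + k = j + 2*k by omega]
    rw [show 2*(k+j)+1 = (2*k+1)+2*j by ring, pow_add x (2*k+1) (2*j), pow_mul x 2 j]
    rw [hc]; ring
  have hvanish : ∀ m ∉ Set.range (fun j : ℕ => k + j),
      (if k ≤ m then (-1:ℝ)^k * 4^(2*k+1) * (((m+k).choose (2*k) : ℕ) : ℝ)
        / ((2*(k:ℝ)+1)^2 * (((2*k).choose k : ℕ) : ℝ)) * x^(2*m+1) else 0) = 0 := by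
    intro m hm
    rw [if_neg]
    intro hkm
    exact hm ⟨m - k, by simp only []; omega⟩
  have hinj : Function.Injective (fun j : ℕ => k + j) := fun a b h => by simpa using h
  have hfin := (hinj.hasSum_iff hvanish).mp (by rw [hcomp]; exact base2)
  convert hfin using 1
  rw [hc]
  have hpow : (2*w)^(2*k+1) = (4*x)^(2*k+1) / (1-x^2)^(2*k+1) := by
    rw [eq_div_iff (pow_ne_zero _ hnz), ← mul_pow]
    congr 1
    linarith [hw]
  rw [hpow]
  field_simp
  ring

lemma choose_lower (k : ℕ) : (4:ℝ)^k ≤ Real.sqrt (4*(k:ℝ)+1) * (((2*k).choose k : ℕ) : ℝ) := by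
  have h : ((16:ℝ))^k ≤ (4*(k:ℝ)+1) * (((2*k).choose k : ℕ) : ℝ)^2 := by
    exact_mod_cast sixteen_pow_le k
  have h4 : (4:ℝ)^k = Real.sqrt ((16:ℝ)^k) := by
    rw [show ((16:ℝ))^k = ((4:ℝ)^k)^2 by
        rw [← pow_mul, show k*2 = 2*k by ring, pow_mul]; norm_num,
      Real.sqrt_sq (by positivity)]
  rw [h4]
  calc Real.sqrt ((16:ℝ)^k) ≤ Real.sqrt ((4*(k:ℝ)+1) * (((2*k).choose k : ℕ) : ℝ)^2) :=
        Real.sqrt_le_sqrt h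
  _ = Real.sqrt (4*(k:ℝ)+1) * (((2*k).choose k : ℕ) : ℝ) := by
      rw [Real.sqrt_mul (by positivity), Real.sqrt_sq (by positivity)]

lemma summable_u {w : ℝ} (hw : |w| ≤ 1) :
    Summable (fun k : ℕ => (2*|w|)^(2*k+1) / ((2*(k:ℝ)+1)^2 * (((2*k).choose k : ℕ) : ℝ))) := by
  have hs : Summable (fun k : ℕ => 4 / ((k:ℝ)+1)^((3:ℝ)/2)) := by
    have h0 : Summable (fun n : ℕ => 1/(n:ℝ)^((3:ℝ)/2)) :=
      Real.summable_one_div_nat_rpow.2 (by norm_num)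
    have h1 : Summable (fun n : ℕ => 1/((n:ℝ)+1)^((3:ℝ)/2)) := by
      have := (summable_nat_add_iff (f := fun n : ℕ => 1/(n:ℝ)^((3:ℝ)/2)) 1).2 h0
      refine this.congr (fun n => ?_)
      push_cast
      ring_nf
    simpa [div_eq_mul_inv] using h1.mul_left 4
  refine Summable.of_nonneg_of_le (fun k => by positivity) (fun k => ?_) hs
  have hCpos : (0:ℝ) < (((2*k).choose k : ℕ) : ℝ) := by
    exact_mod_cast Nat.choose_pos (by omega : k ≤ 2*k)
  have h1 : (2*|w|)^(2*k+1) ≤ 2 * 4^k := by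
    calc (2*|w|)^(2*k+1) ≤ 2^(2*k+1) := by
          apply pow_le_pow_left₀ (by positivity)
          nlinarith [abs_nonneg w]
    _ = 2 * 4^k := by rw [pow_succ, pow_mul]; norm_num [mul_comm]
  have h2 : (2*|w|)^(2*k+1) / ((2*(k:ℝ)+1)^2 * (((2*k).choose k : ℕ) : ℝ))
      ≤ 2 * Real.sqrt (4*(k:ℝ)+1) / (2*(k:ℝ)+1)^2 := by
    rw [div_le_div_iff₀ (by positivity) (by positivity)]
    have hcl := choose_lower k
    nlinarith [h1, hCpos, Real.sqrt_nonneg (4*(k:ℝ)+1), sq_nonneg (2*(k:ℝ)+1),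
      mul_le_mul_of_nonneg_left hcl (le_of_lt (show (0:ℝ) < 2 by norm_num))]
  refine h2.trans ?_
  have h3 : Real.sqrt (4*(k:ℝ)+1) ≤ 2 * Real.sqrt ((k:ℝ)+1) := by
    rw [show (2:ℝ) * Real.sqrt ((k:ℝ)+1) = Real.sqrt (4*((k:ℝ)+1)) by
      rw [show (4:ℝ)*((k:ℝ)+1) = 2^2*((k:ℝ)+1) by ring, Real.sqrt_mul (by positivity),
        Real.sqrt_sq (by norm_num)]]
    exact Real.sqrt_le_sqrt (by linarith)
  have h4 : ((k:ℝ)+1)^2 ≤ (2*(k:ℝ)+1)^2 := by nlinarith [Nat.cast_nonneg (α := ℝ) k]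
  have h5 : 2 * Real.sqrt (4*(k:ℝ)+1) / (2*(k:ℝ)+1)^2 ≤ 4 * Real.sqrt ((k:ℝ)+1) / ((k:ℝ)+1)^2 := by
    rw [div_le_div_iff₀ (by positivity) (by positivity)]
    nlinarith [Real.sqrt_nonneg ((k:ℝ)+1), Real.sqrt_nonneg (4*(k:ℝ)+1),
      mul_le_mul h3 h4 (by positivity) (by positivity)]
  refine h5.trans (le_of_eq ?_)
  rw [show ((3:ℝ)/2) = 2 - 1/2 by norm_num, Real.rpow_sub (by positivity)]
  rw [Real.rpow_two, ← Real.sqrt_eq_rpow]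
  field_simp

lemma summable_li2 (z : ℝ) (hz : |z| ≤ 1/2) :
    Summable (fun n : ℕ => z^(n+1)/(((n+1:ℕ)):ℝ)^2) := by
  refine Summable.of_abs (Summable.of_nonneg_of_le (fun n => abs_nonneg _) (fun n => ?_)
    (summable_geometric_of_lt_one (by norm_num) (by norm_num : (1:ℝ)/2 < 1)))
  rw [abs_div, abs_pow, abs_pow]
  have hd : (1:ℝ) ≤ |((n+1:ℕ):ℝ)|^2 := by
    have : (1:ℝ) ≤ |((n+1:ℕ):ℝ)| := by
      rw [abs_of_nonneg (by positivity)]; exact_mod_cast Nat.one_le_iff_ne_zero.2 (by omega)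
    nlinarith
  calc |z|^(n+1) / |((n+1:ℕ):ℝ)|^2 ≤ |z|^(n+1) / 1 := by
        apply div_le_div_of_nonneg_left (by positivity) (by norm_num) hd
  _ = |z|^(n+1) := by ring
  _ ≤ (1/2)^(n+1) := pow_le_pow_left₀ (abs_nonneg z) hz (n+1)
  _ ≤ (1/2)^n := by
      apply pow_le_pow_of_le_one (by norm_num) (by norm_num)
      omega

lemma summable_odd (z : ℝ) (hz : |z| ≤ 1/2) :
    Summable (fun k : ℕ => z^(2*k+1)/(((2*k+1:ℕ)):ℝ)^2) := by
  refine Summable.of_abs (Summable.of_nonneg_of_le (fun n => abs_nonneg _) (fun k => ?_)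
    (summable_geometric_of_lt_one (by norm_num) (by norm_num : (1:ℝ)/2 < 1)))
  rw [abs_div, abs_pow, abs_pow]
  have hd : (1:ℝ) ≤ |((2*k+1:ℕ):ℝ)|^2 := by
    have : (1:ℝ) ≤ |((2*k+1:ℕ):ℝ)| := by
      rw [abs_of_nonneg (by positivity)]; exact_mod_cast Nat.one_le_iff_ne_zero.2 (by omega)
    nlinarith
  calc |z|^(2*k+1) / |((2*k+1:ℕ):ℝ)|^2 ≤ |z|^(2*k+1) / 1 := by
        apply div_le_div_of_nonneg_left (by positivity) (by norm_num) hd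
  _ = |z|^(2*k+1) := by ring
  _ ≤ (1/2)^(2*k+1) := pow_le_pow_left₀ (abs_nonneg z) hz (2*k+1)
  _ ≤ (1/2)^k := by
      apply pow_le_pow_of_le_one (by norm_num) (by norm_num)
      omega

end H2Aux

set_option maxHeartbeats 2000000 in
open H2Aux in
theorem h2_closed_form (v : ℝ) (hv : |v| ≤ 1)
    (r : ℝ) (hr : r = v / (1 + Real.sqrt (1 + v ^ 2))) :
    (∑' k : ℕ, (-1) ^ k * (2 * v) ^ (2 * k + 1) /
        (((2 * k + 1 : ℕ) : ℝ) ^ 2 * ((Nat.choose (2 * k) k : ℕ) : ℝ))) =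
      4 * (∑' k : ℕ, r ^ (2 * k + 1) / ((2 * k + 1 : ℕ) : ℝ) ^ 2) ∧
    4 * (∑' k : ℕ, r ^ (2 * k + 1) / ((2 * k + 1 : ℕ) : ℝ) ^ 2) =
      2 * Li2 r - 2 * Li2 (-r) := by
  classical
  set s : ℝ := Real.sqrt (1 + v^2) with hs
  have hs0 : 0 ≤ 1 + v^2 := by positivity
  have hss : s^2 = 1 + v^2 := Real.sq_sqrt hs0
  have hs1 : 1 ≤ s := by
    rw [show (1:ℝ) = Real.sqrt 1 from (Real.sqrt_one).symm]
    exact Real.sqrt_le_sqrt (by nlinarith [sq_nonneg v])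
  have h1s : (0:ℝ) < 1 + s := by linarith
  have hvr : v = r * (1+s) := by rw [hr]; field_simp
  have hrsq : r^2 * (1+s)^2 = s^2 - 1 := by
    have h := hss
    rw [hvr] at h
    nlinarith [h]
  have hr2lt : r^2 < 1 := by nlinarith [hrsq, h1s, hs1]
  have hv2r : v * (1 - r^2) = 2*r := by
    have h2 : (1 - r^2) * (1+s) = 2 := by nlinarith [hrsq]
    calc v * (1 - r^2) = r * ((1 - r^2) * (1+s)) := by rw [hvr]; ring
    _ = 2*r := by rw [h2]; ring
  have habs : |v| * (1 - |r|^2) = 2*|r| := by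
    rw [sq_abs]
    have h := congrArg abs hv2r
    rw [abs_mul, abs_of_pos (by nlinarith [hr2lt] : (0:ℝ) < 1 - r^2), abs_mul] at h
    simpa [abs_of_pos, abs_two] using h
  have hrhalf : |r| ≤ 1/2 := by
    have h : |v| = |r| * (1+s) := by rw [hvr, abs_mul, abs_of_pos h1s]
    nlinarith [abs_nonneg r, abs_nonneg v, hv, h, hs1]
  constructor
  · -- part 1
    set F : ℕ × ℕ → ℝ := fun p => if p.1 ≤ p.2 then
        (-1:ℝ)^p.1 * 4^(2*p.1+1) * (((p.2+p.1).choose (2*p.1) : ℕ) : ℝ)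
          / ((2*(p.1:ℝ)+1)^2 * (((2*p.1).choose p.1 : ℕ) : ℝ)) * r^(2*p.2+1) else 0 with hF
    have hslice : ∀ k : ℕ, HasSum (fun n => F (k,n))
        ((-1)^k * (2*v)^(2*k+1) / ((2*(k:ℝ)+1)^2 * (((2*k).choose k : ℕ) : ℝ))) :=
      fun k => stepA r v hr2lt hv2r k
    have hone : ∀ k : ℕ, (-1:ℝ)^k * (-1:ℝ)^k = 1 := by
      intro k
      rw [← pow_add, show k+k = 2*k by ring, pow_mul]
      norm_num
    have habs_slice : ∀ k : ℕ, HasSum (fun n => |F (k,n)|)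
        ((2*|v|)^(2*k+1) / ((2*(k:ℝ)+1)^2 * (((2*k).choose k : ℕ) : ℝ))) := by
      intro k
      have h0 := (stepA |r| |v| (by rwa [sq_abs]) habs k).mul_left ((-1:ℝ)^k)
      have hfe : (fun n : ℕ => (-1:ℝ)^k * (if k ≤ n then
          (-1:ℝ)^k * 4^(2*k+1) * (((n+k).choose (2*k) : ℕ) : ℝ)
            / ((2*(k:ℝ)+1)^2 * (((2*k).choose k : ℕ) : ℝ)) * |r|^(2*n+1) else 0))
          = fun n => |F (k,n)| := by
        funext n
        by_cases hkn : k ≤ n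
        · simp only [hF, if_pos hkn, abs_mul, abs_div, abs_pow, abs_neg, abs_one,
            one_pow, one_mul, Nat.abs_cast]
          rw [abs_of_nonneg (show (0:ℝ) ≤ (4:ℝ) by norm_num),
            abs_of_nonneg (show (0:ℝ) ≤ 2*(k:ℝ)+1 by positivity)]
          linear_combination (4^(2*k+1) * (((n+k).choose (2*k) : ℕ):ℝ)
            / ((2*(k:ℝ)+1)^2 * (((2*k).choose k : ℕ):ℝ)) * |r|^(2*n+1)) * hone k
        · simp [hF, hkn]
      have hve : (-1:ℝ)^k * ((-1)^k * (2*|v|)^(2*k+1)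
            / ((2*(k:ℝ)+1)^2 * (((2*k).choose k : ℕ) : ℝ)))
          = (2*|v|)^(2*k+1) / ((2*(k:ℝ)+1)^2 * (((2*k).choose k : ℕ) : ℝ)) := by
        rw [mul_div_assoc', ← mul_assoc, hone k, one_mul]
      rw [hfe, hve] at h0
      exact h0
    have hFabs_sum : Summable (fun p : ℕ×ℕ => |F p|) := by
      rw [summable_prod_of_nonneg (fun p => abs_nonneg _)]
      exact ⟨fun k => (habs_slice k).summable,
        (summable_u hv).congr (fun k => ((habs_slice k).tsum_eq).symm)⟩
    have hFsum : Summable F := hFabs_sum.of_abs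
    have eq1 : ∑' p : ℕ×ℕ, F p = ∑' k : ℕ,
        ((-1:ℝ)^k * (2*v)^(2*k+1) / ((2*(k:ℝ)+1)^2 * (((2*k).choose k : ℕ) : ℝ))) := by
      rw [Summable.tsum_prod' hFsum (fun k => (hslice k).summable)]
      exact tsum_congr fun k => (hslice k).tsum_eq
    have eq2 : ∑' p : ℕ×ℕ, F p = ∑' n : ℕ, ∑' k : ℕ, F (k, n) := by
      have hsw : Summable (fun q : ℕ×ℕ => F ((Equiv.prodComm ℕ ℕ) q)) :=
        ((Equiv.prodComm ℕ ℕ).summable_iff).2 hFsum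
      have hsl : ∀ n : ℕ, Summable (fun k : ℕ => F ((Equiv.prodComm ℕ ℕ) (n, k))) := by
        intro n
        apply summable_of_ne_finset_zero (s := Finset.range (n+1))
        intro k hk
        simp only [Finset.mem_range] at hk
        show F (k, n) = 0
        simp only [hF]
        exact if_neg (by omega)
      have e1 := (Equiv.prodComm ℕ ℕ).tsum_eq (f := F)
      have e2 := Summable.tsum_prod' hsw hsl
      calc ∑' p : ℕ×ℕ, F p = ∑' q : ℕ×ℕ, F ((Equiv.prodComm ℕ ℕ) q) := e1.symm
      _ = ∑' n : ℕ, ∑' k : ℕ, F ((Equiv.prodComm ℕ ℕ) (n, k)) := e2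
      _ = ∑' n : ℕ, ∑' k : ℕ, F (k, n) := by
        exact tsum_congr fun n => tsum_congr fun k => by
          rw [Equiv.prodComm_apply, Prod.swap_prod_mk]
    have eq3 : ∀ n : ℕ, ∑' k : ℕ, F (k,n) = 4 * r^(2*n+1) / (2*(n:ℝ)+1)^2 := by
      intro n
      rw [tsum_eq_sum (s := Finset.range (n+1)) (fun k hk => by
        simp only [Finset.mem_range] at hk
        simp only [hF]
        exact if_neg (by omega))]
      have hterm : ∀ k ∈ Finset.range (n+1), F (k,n) = tt n k * (4*r^(2*n+1)) := by
        intro k hk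
        simp only [Finset.mem_range] at hk
        simp only [hF, tt, if_pos (show k ≤ n by omega)]
        rw [show (4:ℝ)^(2*k+1) = 4*16^k by
          rw [pow_succ, pow_mul]; norm_num [mul_comm]]
        ring
      rw [Finset.sum_congr rfl hterm, ← Finset.sum_mul, tt_sum n]
      ring
    calc (∑' k : ℕ, (-1:ℝ) ^ k * (2 * v) ^ (2 * k + 1) /
          (((2 * k + 1 : ℕ) : ℝ) ^ 2 * ((Nat.choose (2 * k) k : ℕ) : ℝ)))
        = ∑' k : ℕ, ((-1:ℝ)^k * (2*v)^(2*k+1)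
            / ((2*(k:ℝ)+1)^2 * (((2*k).choose k : ℕ) : ℝ))) := by
          refine tsum_congr fun k => ?_
          push_cast
          ring_nf
      _ = ∑' p : ℕ×ℕ, F p := eq1.symm
      _ = ∑' n : ℕ, ∑' k : ℕ, F (k, n) := eq2
      _ = ∑' n : ℕ, 4 * r^(2*n+1) / (2*(n:ℝ)+1)^2 := tsum_congr eq3
      _ = 4 * (∑' k : ℕ, r ^ (2 * k + 1) / ((2 * k + 1 : ℕ) : ℝ) ^ 2) := by
          rw [← tsum_mul_left]
          refine tsum_congr fun n => ?_
          push_cast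
          ring
  · -- part 2
    have hsub : Summable (fun n : ℕ => r^(n+1)/((n+1:ℕ):ℝ)^2) := summable_li2 r hrhalf
    have hsub2 : Summable (fun n : ℕ => (-r)^(n+1)/((n+1:ℕ):ℝ)^2) :=
      summable_li2 (-r) (by rwa [abs_neg])
    set h : ℕ → ℝ := fun n => r^(n+1)/((n+1:ℕ):ℝ)^2 - (-r)^(n+1)/((n+1:ℕ):ℝ)^2 with hh
    have hT : Summable (fun k : ℕ => r^(2*k+1)/((2*k+1:ℕ):ℝ)^2) := summable_odd r hrhalf
    set T : ℝ := ∑' k : ℕ, r ^ (2 * k + 1) / ((2 * k + 1 : ℕ) : ℝ) ^ 2 with hTdef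
    have he : HasSum (fun k => h (2*k)) (2 * T) := by
      have h1 := (hT.hasSum).mul_left 2
      have hfe : (fun k : ℕ => 2 * (r^(2*k+1)/((2*k+1:ℕ):ℝ)^2)) = fun k => h (2*k) := by
        funext k
        simp only [hh]
        rw [show 2*k+1 = 2*k+1 from rfl]
        have hodd : (-r)^(2*k+1) = -r^(2*k+1) := Odd.neg_pow ⟨k, by ring⟩ r
        rw [hodd]
        ring
      rwa [hfe] at h1
    have ho : HasSum (fun k : ℕ => h (2*k+1)) 0 := by
      have hfe : (fun k : ℕ => h (2*k+1)) = fun _ => (0:ℝ) := by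
        funext k
        simp only [hh]
        have heven : (-r)^(2*k+1+1) = r^(2*k+1+1) := by
          rw [show 2*k+1+1 = 2*(k+1) by ring]
          exact Even.neg_pow (even_two_mul (k+1)) r
        rw [heven]
        ring
      rw [hfe]
      exact hasSum_zero
    have hsum_h := he.even_add_odd ho
    rw [add_zero] at hsum_h
    have h1 : ∑' n, h n = 2*T := hsum_h.tsum_eq
    have h2 : Li2 r - Li2 (-r) = ∑' n, h n := by
      have hts : ∑' n, h n = (∑' n : ℕ, r^(n+1)/((n+1:ℕ):ℝ)^2)
          - ∑' n : ℕ, (-r)^(n+1)/((n+1:ℕ):ℝ)^2 := Summable.tsum_sub hsub hsub2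
      rw [hts]
      simp only [Li2]
    linarith [h1, h2]
end

section
/- For every real number x with 0 < x < 1, 8·F_{2,1}(1,x) = 4·Li₃(x) − Li₃(x²) − 4·Li₃(1−x) − 4·Li₃(x/(1+x)) + 4·ζ(3) + log((1+x)/(1−x))·Li₂(x²) + (π²/2)·log(1+x) + (π²/6)·log(1−x) + (2/3)·log³(1+x) − 2·log(x)·log²(1−x). -/
/-!
Both sides tend to `0` as `x → 0⁺`, so it suffices to compare derivatives on `(0, 1)`.
Differentiating `F21` termwise turns each inner sum into the geometric sum
`(1 - x^(2n+2)) / (1 - x²)`, so `(1 - x²) F21'(x) = π²/8 - x ∑ x^(2n+1)/(2n+1)²`, and the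
odd part of `Li₂` is `Li₂ x - Li₂ (x²) / 4`. On the other side `Li₃' = Li₂ / x` and
`Li₂' = -log (1 - x) / x`; the values of `Li₂` at `1 - x`, `x / (1 + x)` and `-x` that appear
are reduced to `Li₂ x` and `Li₂ (x²)` by Euler's reflection formula, Landen's identity and the
duplication formula, each proved by the same derivative-and-limit argument.
-/

open Real

/-- The polylogarithm `Li_k(z) = ∑_{n≥1} zⁿ/n^k` (real). -/
noncomputable def Li (k : ℕ) (z : ℝ) : ℝ := ∑' n : ℕ, z ^ (n + 1) / ((n + 1 : ℕ) : ℝ) ^ k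

/-- `F_{2,1}(1,x) = ∑_{n≥0} (1/(2n+1)²) ∑_{m=0}^n x^(2m+1)/(2m+1)`. -/
noncomputable def F21 (x : ℝ) : ℝ :=
  ∑' n : ℕ, (1 / ((2 * n + 1 : ℕ) : ℝ) ^ 2) *
    ∑ m ∈ Finset.range (n + 1), x ^ (2 * m + 1) / ((2 * m + 1 : ℕ) : ℝ)

open Filter Topology Set

theorem eqOn_Ioo_of_hasDerivAt_of_tendsto {E : Type*} [NormedAddCommGroup E] [NormedSpace ℝ E]
    {f g f' : ℝ → E} {a b : ℝ} {c : E}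
    (hf : ∀ y ∈ Ioo a b, HasDerivAt f (f' y) y) (hg : ∀ y ∈ Ioo a b, HasDerivAt g (f' y) y)
    (hfa : Tendsto f (𝓝[>] a) (𝓝 c)) (hga : Tendsto g (𝓝[>] a) (𝓝 c)) :
    EqOn f g (Ioo a b) := by
  intro x hx
  obtain ⟨d, hd⟩ := isOpen_Ioo.exists_eq_add_of_deriv_eq isPreconnected_Ioo
    (fun y hy => (hf y hy).differentiableAt.differentiableWithinAt)
    (fun y hy => (hg y hy).differentiableAt.differentiableWithinAt)
    (fun y hy => (hf y hy).deriv.trans (hg y hy).deriv.symm)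
  have hfa' : Tendsto f (𝓝[>] a) (𝓝 (c + d)) :=
    (hga.add_const d).congr' (eventually_of_mem (Ioo_mem_nhdsGT (hx.1.trans hx.2))
      fun y hy => (hd hy).symm)
  have hd0 : d = 0 := by simpa using tendsto_nhds_unique hfa hfa'
  simp [hd hx, hd0]

theorem tendsto_log_mul_log_one_sub :
    Tendsto (fun y => log y * log (1 - y)) (𝓝[>] 0) (𝓝 0) := by
  have hslope : Tendsto (fun y => log (1 - y) / y) (𝓝[>] 0) (𝓝 (-1)) := by
    have h := hasDerivAt_iff_tendsto_slope_zero.mp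
      ((hasDerivAt_id (0 : ℝ)).const_sub 1 |>.log (by norm_num))
    simp only [id, zero_add, sub_zero, log_one, div_one, smul_eq_mul, inv_mul_eq_div] at h
    exact h.mono_left (nhdsWithin_mono 0 fun y (hy : 0 < y) => hy.ne')
  have hylog : Tendsto (fun y => log y * y) (𝓝[>] 0) (𝓝 0) := by
    simpa using tendsto_log_mul_rpow_nhdsGT_zero one_pos
  refine Tendsto.congr' ?_ (by simpa using hylog.mul hslope)
  filter_upwards [self_mem_nhdsWithin] with y hy
  field_simp [hy.out.ne']

theorem hasDerivAt_div_one_add {y : ℝ} (hy : 1 + y ≠ 0) :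
    HasDerivAt (fun t => t / (1 + t)) (1 / (1 + y) ^ 2) y :=
  ((hasDerivAt_id' y).div ((hasDerivAt_id' y).const_add 1) hy).congr_deriv (by ring)

theorem abs_div_one_add_lt_one {y : ℝ} (hy : 0 ≤ y) : |y / (1 + y)| < 1 := by
  rw [abs_of_nonneg (by positivity), div_lt_one (by positivity)]
  linarith

section Polylog

variable {k : ℕ} {x : ℝ}

theorem summable_one_div_succ_pow (hk : 2 ≤ k) :
    Summable fun n : ℕ => 1 / ((n + 1 : ℕ) : ℝ) ^ k :=
  (summable_nat_add_iff 1).mpr (Real.summable_one_div_nat_pow.mpr hk)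

theorem norm_pow_succ_div_le (hx : |x| ≤ 1) (n : ℕ) :
    ‖x ^ (n + 1) / ((n + 1 : ℕ) : ℝ) ^ k‖ ≤ 1 / ((n + 1 : ℕ) : ℝ) ^ k := by
  rw [norm_div, norm_pow, norm_pow, Real.norm_eq_abs, Real.norm_natCast]
  exact div_le_div_of_nonneg_right (pow_le_one₀ (abs_nonneg x) hx) (by positivity)

theorem summable_Li_of_abs_le (hk : 2 ≤ k) (hx : |x| ≤ 1) :
    Summable fun n : ℕ => x ^ (n + 1) / ((n + 1 : ℕ) : ℝ) ^ k :=
  .of_norm_bounded (summable_one_div_succ_pow hk) (norm_pow_succ_div_le hx)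

theorem Li_apply_zero : Li k 0 = 0 := by simp [Li]

theorem Li_apply_one (k : ℕ) : Li k 1 = ∑' n : ℕ, 1 / ((n : ℝ) + 1) ^ k := by
  simp [Li]

theorem Li_two_one : Li 2 1 = π ^ 2 / 6 := by
  rw [Li_apply_one]
  have h := (hasSum_nat_add_iff' 1).mpr hasSum_zeta_two
  simp only [Finset.range_one, Finset.sum_singleton, Nat.cast_zero] at h
  simpa using h.tsum_eq

theorem Li_one_eq_neg_log (hx : |x| < 1) : Li 1 x = -log (1 - x) := by
  rw [Li, ← (Real.hasSum_pow_div_log_of_abs_lt_one hx).tsum_eq]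
  simp

theorem hasDerivAt_Li_succ (hx : |x| < 1) (hx0 : x ≠ 0) :
    HasDerivAt (Li (k + 1)) (Li k x / x) x := by
  obtain ⟨r, hxr, hr1⟩ := exists_between hx
  have key := hasDerivAt_tsum_of_isPreconnected (y₀ := 0) (y := x)
    (g := fun n y => y ^ (n + 1) / ((n + 1 : ℕ) : ℝ) ^ (k + 1))
    (g' := fun n y => y ^ n / ((n + 1 : ℕ) : ℝ) ^ k)
    (summable_geometric_of_lt_one ((abs_nonneg x).trans hxr.le) hr1) Metric.isOpen_ball
    (convex_ball 0 r).isPreconnected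
    (fun n y _ => ?deriv) (fun n y hy => ?bound)
    (Metric.mem_ball_self ((abs_nonneg x).trans_lt hxr)) (by simp) (by simpa using hxr)
  · refine key.congr_deriv ?_
    rw [Li, eq_div_iff hx0, ← tsum_mul_right]
    congr 1 with n
    ring
  case deriv =>
    refine ((hasDerivAt_pow (n + 1) y).div_const (((n + 1 : ℕ) : ℝ) ^ (k + 1))).congr_deriv ?_
    rw [Nat.add_sub_cancel]
    push_cast
    field_simp
    ring
  case bound =>
    rw [mem_ball_zero_iff, Real.norm_eq_abs] at hy
    rw [norm_div, norm_pow, norm_pow, Real.norm_eq_abs, Real.norm_natCast]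
    calc |y| ^ n / ((n + 1 : ℕ) : ℝ) ^ k ≤ |y| ^ n :=
          div_le_self (by positivity) (one_le_pow₀ (by simp))
      _ ≤ r ^ n := pow_le_pow_left₀ (abs_nonneg y) hy.le n

theorem HasDerivAt.Li_succ {f : ℝ → ℝ} {f' : ℝ} (hf : HasDerivAt f f' x) (h1 : |f x| < 1)
    (h0 : f x ≠ 0) : HasDerivAt (fun y => Li (k + 1) (f y)) (Li k (f x) / f x * f') x :=
  (hasDerivAt_Li_succ h1 h0).comp x hf

theorem continuousOn_Li (hk : 2 ≤ k) : ContinuousOn (Li k) (Icc (-1) 1) :=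
  continuousOn_tsum (fun n => by fun_prop) (summable_one_div_succ_pow hk)
    fun n y hy => norm_pow_succ_div_le (abs_le.mpr hy) n

theorem tendsto_Li_nhdsGT_zero {f : ℝ → ℝ} (hk : 2 ≤ k) (hf : ContinuousAt f 0)
    (hs : MapsTo f (Ioo 0 1) (Icc (-1) 1)) (h0 : f 0 ∈ Icc (-1) 1) :
    Tendsto (fun y => Li k (f y)) (𝓝[>] 0) (𝓝 (Li k (f 0))) := by
  rw [← nhdsWithin_Ioo_eq_nhdsGT one_pos]
  exact ((continuousOn_Li hk (f 0) h0).comp hf.continuousWithinAt hs).tendsto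

theorem hasSum_Li_odd (hk : 2 ≤ k) (hx : |x| ≤ 1) :
    HasSum (fun n : ℕ => x ^ (2 * n + 1) / ((2 * n + 1 : ℕ) : ℝ) ^ k)
      (Li k x - Li k (x ^ 2) / 2 ^ k) := by
  have hs := summable_Li_of_abs_le hk hx
  have he : Summable fun n : ℕ => x ^ (2 * n + 1) / ((2 * n + 1 : ℕ) : ℝ) ^ k :=
    hs.comp_injective (i := fun n => 2 * n) (mul_right_injective₀ two_ne_zero)
  have ho : Summable fun n : ℕ => x ^ (2 * n + 1 + 1) / ((2 * n + 1 + 1 : ℕ) : ℝ) ^ k :=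
    hs.comp_injective (i := fun n => 2 * n + 1) fun a b h => by simpa using h
  have hodd : ∑' n : ℕ, x ^ (2 * n + 1 + 1) / ((2 * n + 1 + 1 : ℕ) : ℝ) ^ k
      = Li k (x ^ 2) / 2 ^ k := by
    rw [Li, ← tsum_div_const]
    refine tsum_congr fun n => ?_
    rw [show ((2 * n + 1 + 1 : ℕ) : ℝ) = 2 * ((n + 1 : ℕ) : ℝ) by push_cast; ring, mul_pow,
      ← pow_mul]
    ring
  rw [Li, ← tsum_even_add_odd (f := fun j => x ^ (j + 1) / ((j + 1 : ℕ) : ℝ) ^ k) he ho, hodd,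
    add_sub_cancel_right]
  exact he.hasSum

theorem hasSum_one_div_odd_sq :
    HasSum (fun n : ℕ => 1 / ((2 * n + 1 : ℕ) : ℝ) ^ 2) (π ^ 2 / 8) := by
  have h := hasSum_Li_odd le_rfl (by norm_num : |(1 : ℝ)| ≤ 1)
  simp only [one_pow, Li_two_one] at h
  convert h using 1
  ring

theorem Li_add_Li_neg (hk : 2 ≤ k) (hx : |x| ≤ 1) :
    Li k x + Li k (-x) = 2 * Li k (x ^ 2) / 2 ^ k := by
  have hneg := hasSum_Li_odd hk (x := -x) (by rwa [abs_neg])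
  simp only [Odd.neg_pow (odd_two_mul_add_one _), neg_sq, neg_div] at hneg
  have := (hasSum_Li_odd hk hx).neg.unique hneg
  rw [mul_div_assoc]
  linarith

end Polylog

section Dilogarithm

variable {x : ℝ}

theorem Li_two_add_Li_two_one_sub (hx : x ∈ Ioo 0 1) :
    Li 2 x + Li 2 (1 - x) = π ^ 2 / 6 - log x * log (1 - x) := by
  have key := eqOn_Ioo_of_hasDerivAt_of_tendsto (f' := 0)
    (f := fun y => Li 2 y + Li 2 (1 - y) + log y * log (1 - y)) (g := fun _ => π ^ 2 / 6)
    ?deriv (fun y _ => hasDerivAt_const y _) ?limit tendsto_const_nhds hx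
  · simp only at key
    linarith
  case deriv =>
    rintro y ⟨hy0, hy1⟩
    have hy : |y| < 1 := by rwa [abs_of_pos hy0]
    have hy' : |1 - y| < 1 := by rw [abs_of_pos (by linarith)]; linarith
    have hsub := (hasDerivAt_id' y).const_sub 1
    refine (((hasDerivAt_Li_succ (k := 1) hy hy0.ne').add
      (hsub.Li_succ (k := 1) hy' (by linarith))).add
      ((hasDerivAt_log hy0.ne').mul (hsub.log (by linarith)))).congr_deriv ?_
    rw [Pi.zero_apply, Li_one_eq_neg_log hy, Li_one_eq_neg_log hy', sub_sub_cancel]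
    field_simp
    ring
  case limit =>
    have hLi :
        Tendsto (fun y => Li 2 y + Li 2 (1 - y)) (𝓝[>] 0) (𝓝 (Li 2 0 + Li 2 (1 - 0))) :=
      (tendsto_Li_nhdsGT_zero le_rfl (continuousAt_id' 0)
        (fun y ⟨h0, h1⟩ => ⟨by linarith, h1.le⟩) (by norm_num)).add
      (tendsto_Li_nhdsGT_zero le_rfl (by fun_prop)
        (fun y ⟨h0, h1⟩ => ⟨by linarith, by linarith⟩) (by norm_num))
    simpa [Li_apply_zero, Li_two_one] using hLi.add tendsto_log_mul_log_one_sub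

theorem Li_two_neg_add_Li_two_div_one_add (hx : x ∈ Ioo 0 1) :
    Li 2 (-x) + Li 2 (x / (1 + x)) = -log (1 + x) ^ 2 / 2 := by
  have key := eqOn_Ioo_of_hasDerivAt_of_tendsto (f' := 0)
    (f := fun y => Li 2 (-y) + Li 2 (y / (1 + y)) + log (1 + y) ^ 2 / 2) (g := fun _ => 0)
    ?deriv (fun y _ => hasDerivAt_const y _) ?limit tendsto_const_nhds hx
  · simp only at key
    linarith
  case deriv =>
    rintro y ⟨hy0, hy1⟩
    have h1y : 0 < 1 + y := by linarith
    have hy : |-y| < 1 := by rwa [abs_neg, abs_of_pos hy0]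
    have hw := abs_div_one_add_lt_one hy0.le
    refine ((((hasDerivAt_neg y).Li_succ (k := 1) hy (neg_ne_zero.mpr hy0.ne')).add
      ((hasDerivAt_div_one_add h1y.ne').Li_succ (k := 1) hw (div_ne_zero hy0.ne' h1y.ne'))).add
      ((((hasDerivAt_id' y).const_add 1).log h1y.ne').pow 2 |>.div_const 2)).congr_deriv ?_
    rw [Pi.zero_apply, Li_one_eq_neg_log hy, Li_one_eq_neg_log hw, sub_neg_eq_add,
      show 1 - y / (1 + y) = (1 + y)⁻¹ by field_simp; ring, log_inv]
    field_simp
    ring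
  case limit =>
    have hLi : Tendsto (fun y => Li 2 (-y) + Li 2 (y / (1 + y))) (𝓝[>] 0)
        (𝓝 (Li 2 (-0) + Li 2 (0 / (1 + 0)))) :=
      (tendsto_Li_nhdsGT_zero le_rfl (by fun_prop)
        (fun y ⟨h0, h1⟩ => ⟨by linarith, by linarith⟩) (by norm_num)).add
      (tendsto_Li_nhdsGT_zero le_rfl (by fun_prop (disch := norm_num))
        (fun y hy => abs_le.mp (abs_div_one_add_lt_one hy.1.le).le) (by norm_num))
    have hlog : Tendsto (fun y => log (1 + y) ^ 2 / 2) (𝓝[>] 0) (𝓝 (log (1 + 0) ^ 2 / 2)) :=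
      (ContinuousAt.tendsto (by fun_prop (disch := norm_num))).mono_left nhdsWithin_le_nhds
    simpa [Li_apply_zero] using hLi.add hlog

end Dilogarithm

section F21

open Finset

theorem hasDerivAt_sum_range_odd_pow_div (n : ℕ) (x : ℝ) :
    HasDerivAt (fun y => ∑ m ∈ range n, y ^ (2 * m + 1) / ((2 * m + 1 : ℕ) : ℝ))
      (∑ m ∈ range n, x ^ (2 * m)) x := by
  refine HasDerivAt.fun_sum fun m _ => ((hasDerivAt_pow _ x).div_const _).congr_deriv ?_
  rw [Nat.add_sub_cancel, mul_div_cancel_left₀ _ (by positivity)]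

theorem sum_range_pow_two_mul_le {y r : ℝ} (hy : |y| ≤ r) (hr : r < 1) (n : ℕ) :
    ∑ m ∈ range n, y ^ (2 * m) ≤ (1 - r ^ 2)⁻¹ := by
  have hy2 : y ^ 2 ≤ r ^ 2 := sq_le_sq' (abs_le.mp hy).1 (abs_le.mp hy).2
  have hr2 : r ^ 2 < 1 := by nlinarith [abs_nonneg y]
  calc ∑ m ∈ range n, y ^ (2 * m) ≤ ∑ m ∈ range n, (r ^ 2) ^ m := by
        gcongr with m
        rw [pow_mul]
        exact pow_le_pow_left₀ (sq_nonneg y) hy2 m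
    _ ≤ ∑' m, (r ^ 2) ^ m :=
        (summable_geometric_of_lt_one (sq_nonneg r) hr2).sum_le_tsum _ fun m _ => by positivity
    _ = (1 - r ^ 2)⁻¹ := tsum_geometric_of_lt_one (sq_nonneg r) hr2

theorem hasDerivAt_F21 {x : ℝ} (hx : |x| < 1) :
    HasDerivAt F21 ((π ^ 2 / 8 - x * (Li 2 x - Li 2 (x ^ 2) / 4)) / (1 - x ^ 2)) x := by
  obtain ⟨r, hxr, hr1⟩ := exists_between hx
  have hr0 : 0 < r := (abs_nonneg x).trans_lt hxr
  have key := hasDerivAt_tsum_of_isPreconnected (y₀ := 0) (y := x)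
    (g := fun n y => 1 / ((2 * n + 1 : ℕ) : ℝ) ^ 2 *
      ∑ m ∈ range (n + 1), y ^ (2 * m + 1) / ((2 * m + 1 : ℕ) : ℝ))
    (g' := fun n y => 1 / ((2 * n + 1 : ℕ) : ℝ) ^ 2 * ∑ m ∈ range (n + 1), y ^ (2 * m))
    (hasSum_one_div_odd_sq.summable.mul_right (1 - r ^ 2)⁻¹) Metric.isOpen_ball
    (convex_ball 0 r).isPreconnected
    (fun n y _ => (hasDerivAt_sum_range_odd_pow_div _ y).const_mul _) (fun n y hy => ?bound)
    (Metric.mem_ball_self hr0) (by simp)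
    (by simpa using hxr)
  · refine key.congr_deriv (HasSum.tsum_eq ?_)
    have h1x : 1 - x ^ 2 ≠ 0 := by nlinarith [abs_nonneg x, sq_abs x]
    have hsum := (hasSum_one_div_odd_sq.sub ((hasSum_Li_odd le_rfl hx.le).mul_left x)).div_const
      (1 - x ^ 2)
    rw [show (2 : ℝ) ^ 2 = 4 by norm_num] at hsum
    refine hsum.congr_fun fun n => ?_
    have hgeom : ∑ m ∈ range (n + 1), x ^ (2 * m) = (1 - (x ^ 2) ^ (n + 1)) / (1 - x ^ 2) := by
      rw [eq_div_iff h1x, mul_comm]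
      simp_rw [pow_mul]
      exact mul_neg_geom_sum _ _
    rw [hgeom, ← pow_mul]
    field_simp
    ring
  case bound =>
    rw [mem_ball_zero_iff, Real.norm_eq_abs] at hy
    rw [norm_mul, norm_div, norm_one, norm_pow, Real.norm_natCast,
      Real.norm_of_nonneg (sum_nonneg fun m _ => by rw [pow_mul]; positivity)]
    gcongr
    exact sum_range_pow_two_mul_le hy.le hr1 _

theorem tendsto_F21_nhdsGT_zero : Tendsto F21 (𝓝[>] 0) (𝓝 0) := by
  have hF21 : F21 0 = 0 := by simp [F21]
  simpa [hF21] using (hasDerivAt_F21 (x := 0) (by simp)).continuousAt.continuousWithinAt.tendsto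

end F21

noncomputable def closedFormF21 (x : ℝ) : ℝ :=
  4 * Li 3 x - Li 3 (x ^ 2) - 4 * Li 3 (1 - x) - 4 * Li 3 (x / (1 + x)) + 4 * Li 3 1
    + (log (1 + x) - log (1 - x)) * Li 2 (x ^ 2) + π ^ 2 / 2 * log (1 + x)
    + π ^ 2 / 6 * log (1 - x) + 2 / 3 * log (1 + x) ^ 3 - 2 * log x * log (1 - x) ^ 2

theorem hasDerivAt_closedFormF21 {y : ℝ} (hy : y ∈ Ioo 0 1) :
    HasDerivAt closedFormF21
      (8 * ((π ^ 2 / 8 - y * (Li 2 y - Li 2 (y ^ 2) / 4)) / (1 - y ^ 2))) y := by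
  obtain ⟨hy0, hy1⟩ := hy
  have h1y : 0 < 1 + y := by linarith
  have h1y' : 0 < 1 - y := by linarith
  have habs : |y| < 1 := by rwa [abs_of_pos hy0]
  have habs2 : |y ^ 2| < 1 := by rw [abs_pow]; exact pow_lt_one₀ (abs_nonneg y) habs two_ne_zero
  have habs1 : |1 - y| < 1 := by rw [abs_of_pos h1y']; linarith
  have hw := abs_div_one_add_lt_one hy0.le
  have hsq := hasDerivAt_pow 2 y
  have hsub := (hasDerivAt_id' y).const_sub 1
  have hlogp := ((hasDerivAt_id' y).const_add 1).log h1y.ne'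
  have hlogm := hsub.log h1y'.ne'
  have hLi3 := ((((hasDerivAt_Li_succ (k := 2) habs hy0.ne').const_mul 4).sub
    (hsq.Li_succ (k := 2) habs2 (by positivity))).sub
    ((hsub.Li_succ (k := 2) habs1 h1y'.ne').const_mul 4)).sub
    (((hasDerivAt_div_one_add h1y.ne').Li_succ (k := 2) hw (by positivity)).const_mul 4)
  have hLi2 := (hlogp.sub hlogm).mul (hsq.Li_succ (k := 1) habs2 (by positivity))
  refine ((((((hLi3.add_const (4 * Li 3 1)).add hLi2).add (hlogp.const_mul (π ^ 2 / 2))).add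
    (hlogm.const_mul (π ^ 2 / 6))).add ((hlogp.pow 3).const_mul (2 / 3))).sub
    (((hasDerivAt_log hy0.ne').const_mul 2).mul (hlogm.pow 2))).congr_deriv ?_
  have hreflection := Li_two_add_Li_two_one_sub ⟨hy0, hy1⟩
  have hlanden := Li_two_neg_add_Li_two_div_one_add ⟨hy0, hy1⟩
  have hdup := Li_add_Li_neg le_rfl habs.le
  have hlog : log (1 - y ^ 2) = log (1 - y) + log (1 + y) := by
    rw [← log_mul h1y'.ne' h1y.ne']; ring_nf
  have h1y2 : 1 - y ^ 2 ≠ 0 := by nlinarith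
  simp only [Pi.sub_apply, Pi.pow_apply, Nat.cast_ofNat, show 1 + 1 = 2 from rfl]
  rw [Li_one_eq_neg_log habs2, hlog, eq_sub_of_add_eq' hreflection, eq_sub_of_add_eq' hlanden,
    eq_sub_of_add_eq' hdup]
  field_simp
  ring

theorem tendsto_closedFormF21_nhdsGT_zero : Tendsto closedFormF21 (𝓝[>] 0) (𝓝 0) := by
  have hLi3 := tendsto_Li_nhdsGT_zero (k := 3) (by norm_num) (continuousAt_id' 0)
    (fun y ⟨h0, h1⟩ => ⟨by linarith, h1.le⟩) (by norm_num)
  have hLi3sq := tendsto_Li_nhdsGT_zero (k := 3) (f := fun y => y ^ 2) (by norm_num) (by fun_prop)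
    (fun y ⟨h0, h1⟩ => ⟨by nlinarith, by nlinarith⟩) (by norm_num)
  have hLi3sub := tendsto_Li_nhdsGT_zero (k := 3) (f := fun y => 1 - y) (by norm_num) (by fun_prop)
    (fun y ⟨h0, h1⟩ => ⟨by linarith, by linarith⟩) (by norm_num)
  have hLi3div := tendsto_Li_nhdsGT_zero (k := 3) (f := fun y => y / (1 + y)) (by norm_num)
    (by fun_prop (disch := norm_num)) (fun y hy => abs_le.mp (abs_div_one_add_lt_one hy.1.le).le)
    (by norm_num)
  have hLi2sq := tendsto_Li_nhdsGT_zero (k := 2) (f := fun y => y ^ 2) le_rfl (by fun_prop)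
    (fun y ⟨h0, h1⟩ => ⟨by nlinarith, by nlinarith⟩) (by norm_num)
  have hlogp : Tendsto (fun y => log (1 + y)) (𝓝[>] 0) (𝓝 (log (1 + 0))) :=
    (ContinuousAt.continuousWithinAt (by fun_prop (disch := norm_num))).tendsto
  have hlogm : Tendsto (fun y => log (1 - y)) (𝓝[>] 0) (𝓝 (log (1 - 0))) :=
    (ContinuousAt.continuousWithinAt (by fun_prop (disch := norm_num))).tendsto
  have hloglog : Tendsto (fun y => 2 * log y * log (1 - y) ^ 2) (𝓝[>] 0) (𝓝 0) := by
    have h := (tendsto_log_mul_log_one_sub.mul hlogm).const_mul 2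
    rw [sub_zero, log_one, mul_zero, mul_zero] at h
    exact h.congr fun y => by ring
  have h := (((((((((hLi3.const_mul 4).sub hLi3sq).sub (hLi3sub.const_mul 4)).sub
    (hLi3div.const_mul 4)).add_const (4 * Li 3 1)).add ((hlogp.sub hlogm).mul hLi2sq)).add
    (hlogp.const_mul (π ^ 2 / 2))).add (hlogm.const_mul (π ^ 2 / 6))).add
    ((hlogp.pow 3).const_mul (2 / 3))).sub hloglog
  unfold closedFormF21
  convert h using 2
  simp [Li_apply_zero]

theorem F21_closed_form (x : ℝ) (hx0 : 0 < x) (hx1 : x < 1) :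
    8 * F21 x =
      4 * Li 3 x - Li 3 (x ^ 2) - 4 * Li 3 (1 - x) - 4 * Li 3 (x / (1 + x))
        + 4 * (∑' n : ℕ, 1 / ((n : ℝ) + 1) ^ 3)
        + Real.log ((1 + x) / (1 - x)) * Li 2 (x ^ 2)
        + (Real.pi ^ 2 / 2) * Real.log (1 + x)
        + (Real.pi ^ 2 / 6) * Real.log (1 - x)
        + (2 / 3) * (Real.log (1 + x)) ^ 3
        - 2 * Real.log x * (Real.log (1 - x)) ^ 2 := by
  have key := eqOn_Ioo_of_hasDerivAt_of_tendsto (f := fun y => 8 * F21 y) (g := closedFormF21)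
    (fun y hy => (hasDerivAt_F21 (by rw [abs_of_pos hy.1]; exact hy.2)).const_mul 8)
    (fun y hy => hasDerivAt_closedFormF21 hy)
    (by simpa using tendsto_F21_nhdsGT_zero.const_mul 8) tendsto_closedFormF21_nhdsGT_zero
    ⟨hx0, hx1⟩
  refine key.trans ?_
  rw [closedFormF21, Li_apply_one, log_div (by linarith) (by linarith)]
end

section
/- For every real number v with 0 < v ≤ 1, S(v,v) = (1/2)·Re( Li₃(e^{2i·arcsin v}) ) − ζ(3)/2 + arcsin(v)·Im( Li₂(e^{2i·arcsin v}) ) + (arcsin v)²·log(2v); that is, ∫₀¹ (arcsin(vx))²/x dx equals ( Li₃(e^{2i arcsin v}) + Li₃(e^{−2i arcsin v}) )/4 − ζ(3)/2 + arcsin(v)·( Li₂(e^{2i arcsin v}) − Li₂(e^{−2i arcsin v}) )/(2i) + (arcsin v)² log(2v). -/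
open Real MeasureTheory intervalIntegral

/-- The complex dilogarithm `Li₂(z) = ∑_{n≥1} zⁿ/n²`. -/
noncomputable def Li2c (z : ℂ) : ℂ := ∑' n : ℕ, z ^ (n + 1) / ((n + 1 : ℕ) : ℂ) ^ 2

/-- The complex trilogarithm `Li₃(z) = ∑_{n≥1} zⁿ/n³`. -/
noncomputable def Li3c (z : ℂ) : ℂ := ∑' n : ℕ, z ^ (n + 1) / ((n + 1 : ℕ) : ℂ) ^ 3

/-!
Substituting `u = v x` and then `u = sin t` turns `S(v,v)` into `∫₀^θ t² cot t dt` with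
`θ = arcsin v`, and an integration by parts turns this into
`θ² log(2v) - ∫₀^θ 2t log(2 sin t) dt`.
Since `log(2 sin t) = log |1 - e^{2it}| = -Re Li₁(e^{2it})`, the last integrand is formally the
`t`-derivative of `-G(1,t)`, where `G = polylogPrimitive`,
`G(r,t) = (Li₃(re^{2it}) + Li₃(re^{-2it}))/4 + t (Li₂(re^{2it}) - Li₂(re^{-2it}))/(2i)`.
On the unit circle the series cannot be differentiated termwise, so
`∫₀^θ 2t log |1 - re^{2it}| dt = G(r,0) - G(r,θ)` is proved for `r < 1` and then `r → 1⁻`: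
the integrals converge by dominated convergence (the integrand is bounded by
`2θ (|log sin t| + log 2)`), and `G(r,·) → G(1,·)` by continuity of `Li₂`, `Li₃` on the
closed disc. Finally `G(1,0) = ζ(3)/2`.
-/

open Filter Set Complex
open scoped Topology ComplexConjugate

lemma integral_comp_mul_div_self (f : ℝ → ℝ) {v : ℝ} (hv : v ≠ 0) :
    ∫ x in (0 : ℝ)..1, f (v * x) / x = ∫ u in (0 : ℝ)..v, f u / u := by
  have h (x : ℝ) : f (v * x) / x = v * (f (v * x) / (v * x)) := by
    rcases eq_or_ne x 0 with rfl | hx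
    · simp
    · field_simp
  have hsubst := smul_integral_comp_mul_left (fun u => f u / u) v (a := 0) (b := 1)
  simp only [smul_eq_mul, mul_zero, mul_one] at hsubst
  simp_rw [h]
  rw [intervalIntegral.integral_const_mul, hsubst]

lemma integral_arcsin_sq_div_self {v : ℝ} (hv0 : 0 ≤ v) (hv1 : v ≤ 1) :
    ∫ u in (0 : ℝ)..v, arcsin u ^ 2 / u = ∫ t in (0 : ℝ)..arcsin v, t ^ 2 * Real.cot t := by
  have hθ0 : 0 ≤ arcsin v := arcsin_nonneg.mpr hv0
  have hθπ := arcsin_le_pi_div_two v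
  have hcos (t : ℝ) (ht : t ∈ Ioo (min 0 (arcsin v)) (max 0 (arcsin v))) :
      0 ≤ Real.cos t := by
    rw [min_eq_left hθ0, max_eq_right hθ0] at ht
    exact Real.cos_nonneg_of_mem_Icc ⟨by linarith [pi_pos, ht.1], ht.2.le.trans hθπ⟩
  have h := integral_comp_mul_deriv_of_deriv_nonneg (g := fun u => arcsin u ^ 2 / u)
    Real.continuous_sin.continuousOn (fun t _ => Real.hasDerivAt_sin t) hcos
  rw [Real.sin_zero, Real.sin_arcsin (by linarith) hv1] at h
  rw [← h]
  refine integral_congr fun t ht => ?_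
  rw [uIcc_of_le hθ0] at ht
  simp only [Function.comp_apply, Real.cot_eq_cos_div_sin]
  rw [arcsin_sin (by linarith [pi_pos, ht.1]) (ht.2.trans hθπ)]
  ring

lemma sinc_ne_zero_of_mem_Ioo {t : ℝ} (ht : t ∈ Ioo (-π) π) : sinc t ≠ 0 := by
  rcases eq_or_ne t 0 with rfl | h0
  · simp
  · rw [sinc_of_ne_zero h0]
    exact div_ne_zero (fun h => h0 ((Real.sin_eq_zero_iff_of_lt_of_lt ht.1 ht.2).mp h)) h0

lemma continuousOn_sq_mul_cot : ContinuousOn (fun t => t ^ 2 * Real.cot t) (Ioo (-π) π) := by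
  have h (t : ℝ) : t ^ 2 * Real.cot t = t * Real.cos t / sinc t := by
    rcases eq_or_ne t 0 with rfl | h0
    · simp
    · rw [sinc_of_ne_zero h0, Real.cot_eq_cos_div_sin]
      -- at the other zeros of `sin` both sides are `0`, by the convention `x / 0 = 0`
      rcases eq_or_ne (Real.sin t) 0 with hs | hs
      · simp [hs]
      · field_simp
  simp_rw [h]
  exact (by fun_prop : Continuous fun t => t * Real.cos t).continuousOn.div
    continuous_sinc.continuousOn fun t ht => sinc_ne_zero_of_mem_Ioo ht

lemma continuousOn_mul_log_two_sin :
    ContinuousOn (fun t => t * Real.log (2 * Real.sin t)) (Ioo (-π) π) := by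
  have h {t : ℝ} (ht : t ∈ Ioo (-π) π) :
      (2 * t * Real.log (2 * t)) / 2 + t * Real.log (sinc t) = t * Real.log (2 * Real.sin t) := by
    rcases eq_or_ne t 0 with rfl | h0
    · simp
    · have hsin : 2 * Real.sin t = 2 * t * sinc t := by
        rw [sinc_of_ne_zero h0]
        field_simp
      rw [hsin, Real.log_mul (by positivity) (sinc_ne_zero_of_mem_Ioo ht)]
      ring
  refine ContinuousOn.congr ?_ fun t ht => (h ht).symm
  exact ((Real.continuous_mul_log.comp (continuous_const_mul 2)).continuousOn.div_const 2).add
    (continuousOn_id.mul (continuous_sinc.continuousOn.log fun t ht => sinc_ne_zero_of_mem_Ioo ht))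

lemma integral_sq_mul_cot {θ : ℝ} (hθ0 : 0 ≤ θ) (hθ : θ < π) :
    ∫ t in (0 : ℝ)..θ, t ^ 2 * Real.cot t
      = θ ^ 2 * Real.log (2 * Real.sin θ)
        - ∫ t in (0 : ℝ)..θ, 2 * t * Real.log (2 * Real.sin t) := by
  have hsub : Icc 0 θ ⊆ Ioo (-π) π :=
    fun t ht => ⟨by linarith [pi_pos, ht.1], ht.2.trans_lt hθ⟩
  have hlog := continuousOn_mul_log_two_sin.mono hsub
  have hderiv (t : ℝ) (ht : t ∈ Ioo 0 θ) :
      HasDerivAt (fun t => t ^ 2 * Real.log (2 * Real.sin t))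
      (2 * t * Real.log (2 * Real.sin t) + t ^ 2 * Real.cot t) t := by
    have hsin : 0 < Real.sin t := Real.sin_pos_of_pos_of_lt_pi ht.1 (ht.2.trans hθ)
    refine ((hasDerivAt_pow 2 t).mul (((Real.hasDerivAt_sin t).const_mul 2).log
      (by positivity))).congr_deriv ?_
    rw [Real.cot_eq_cos_div_sin]
    field_simp
    ring
  have hint₁ : IntervalIntegrable (fun t => 2 * t * Real.log (2 * Real.sin t)) volume 0 θ :=
    ContinuousOn.intervalIntegrable_of_Icc hθ0 <| (hlog.const_smul (2 : ℝ)).congr fun t _ => by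
      simp only [Pi.smul_apply, smul_eq_mul]
      ring
  have hint₂ : IntervalIntegrable (fun t => t ^ 2 * Real.cot t) volume 0 θ :=
    (continuousOn_sq_mul_cot.mono hsub).intervalIntegrable_of_Icc hθ0
  have hFTC := integral_eq_sub_of_hasDeriv_right_of_le hθ0
    ((continuousOn_id.mul hlog).congr fun t _ => by simp only [Pi.mul_apply, id_eq]; ring)
    (fun t ht => (hderiv t ht).hasDerivWithinAt) (hint₁.add hint₂)
  rw [intervalIntegral.integral_add hint₁ hint₂] at hFTC
  simp only [ne_eq, OfNat.ofNat_ne_zero, not_false_eq_true, zero_pow, zero_mul, sub_zero] at hFTC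
  linarith

-- `Li2c` and `Li3c` are `polylogSeries 2` and `polylogSeries 3` by definition.
noncomputable def polylogSeries (k : ℕ) (z : ℂ) : ℂ :=
  ∑' n : ℕ, z ^ (n + 1) / ((n + 1 : ℕ) : ℂ) ^ k

lemma summable_one_div_add_one_sq : Summable (fun n : ℕ => 1 / ((n : ℝ) + 1) ^ 2) := by
  exact_mod_cast (summable_nat_add_iff 1).mpr (Real.summable_one_div_nat_pow.mpr one_lt_two)

lemma norm_polylogSeries_term_le {k : ℕ} (hk : 2 ≤ k) {z : ℂ} (hz : ‖z‖ ≤ 1) (n : ℕ) :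
    ‖z ^ (n + 1) / ((n + 1 : ℕ) : ℂ) ^ k‖ ≤ 1 / ((n : ℝ) + 1) ^ 2 := by
  rw [norm_div, norm_pow, norm_pow, Complex.norm_natCast, Nat.cast_succ]
  gcongr
  · exact pow_le_one₀ (norm_nonneg z) hz
  · exact le_add_of_nonneg_left n.cast_nonneg

lemma norm_polylogSeries_term_le_pow {z : ℂ} {r : ℝ} (hz : ‖z‖ ≤ r) (k n : ℕ) :
    ‖z ^ (n + 1) / ((n + 1 : ℕ) : ℂ) ^ k‖ ≤ r ^ (n + 1) := by
  rw [norm_div, norm_pow, norm_pow, Complex.norm_natCast]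
  refine div_le_self (by positivity) (one_le_pow₀ ?_) |>.trans ?_
  · exact_mod_cast Nat.succ_pos n
  · exact pow_le_pow_left₀ (norm_nonneg _) hz _

lemma continuousOn_polylogSeries {k : ℕ} (hk : 2 ≤ k) :
    ContinuousOn (polylogSeries k) (Metric.closedBall 0 1) :=
  continuousOn_tsum (fun n => by fun_prop) summable_one_div_add_one_sq
    fun n z hz => norm_polylogSeries_term_le hk (mem_closedBall_zero_iff.mp hz) n

lemma polylogSeries_one {z : ℂ} (hz : ‖z‖ < 1) : polylogSeries 1 z = -log (1 - z) := by
  rw [← (hasSum_taylorSeries_neg_log hz).tsum_eq, polylogSeries,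
    (hasSum_taylorSeries_neg_log hz).summable.tsum_eq_zero_add]
  simp

lemma hasDerivAt_polylogSeries_comp (k : ℕ) {w : ℝ → ℂ} {c : ℂ} {r : ℝ} (hr : r < 1)
    (hw : ∀ s, HasDerivAt w (c * w s) s) (hwr : ∀ s, ‖w s‖ ≤ r) (t : ℝ) :
    HasDerivAt (fun s => polylogSeries (k + 1) (w s)) (c * polylogSeries k (w t)) t := by
  have hgeom : Summable fun n : ℕ => r ^ (n + 1) :=
    (summable_nat_add_iff 1).mpr
      (summable_geometric_of_lt_one ((norm_nonneg _).trans (hwr 0)) hr)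
  have hterm (n : ℕ) (s : ℝ) :
      HasDerivAt (fun s => w s ^ (n + 1) / ((n + 1 : ℕ) : ℂ) ^ (k + 1))
      (c * (w s ^ (n + 1) / ((n + 1 : ℕ) : ℂ) ^ k)) s := by
    refine (((hw s).pow (n + 1)).div_const (((n + 1 : ℕ) : ℂ) ^ (k + 1))).congr_deriv ?_
    rw [Nat.add_sub_cancel]
    field_simp
    ring
  have hbound (n : ℕ) (s : ℝ) :
      ‖c * (w s ^ (n + 1) / ((n + 1 : ℕ) : ℂ) ^ k)‖ ≤ ‖c‖ * r ^ (n + 1) := by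
    rw [norm_mul]
    exact mul_le_mul_of_nonneg_left (norm_polylogSeries_term_le_pow (hwr s) k n) (norm_nonneg c)
  have hsum := hgeom.of_norm_bounded fun n => norm_polylogSeries_term_le_pow (hwr 0) (k + 1) n
  simpa only [polylogSeries, tsum_mul_left] using
    hasDerivAt_tsum (hgeom.mul_left ‖c‖) hterm hbound hsum t

lemma log_one_sub_add_log_one_sub_conj {z : ℂ} (hz : ‖z‖ < 1) :
    log (1 - z) + log (1 - conj z) = 2 * Real.log ‖1 - z‖ := by
  have hre : 0 < (1 - z).re := by
    rw [sub_re, one_re, sub_pos]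
    exact (re_le_norm z).trans_lt hz
  have harg : (1 - z).arg ≠ π := fun h => by
    linarith [(arg_eq_pi_iff.mp h).1]
  rw [show 1 - conj z = conj (1 - z) by simp, log_conj _ harg, add_conj, log_re]
  push_cast
  ring

lemma hasDerivAt_ofReal_mul_exp_mul (r : ℝ) (c : ℂ) (s : ℝ) :
    HasDerivAt (fun s : ℝ => (r : ℂ) * exp (c * s)) (c * (r * exp (c * s))) s := by
  have := (((hasDerivAt_id (s : ℂ)).const_mul c).cexp.const_mul (r : ℂ)).comp_ofReal
  simpa [mul_comm, mul_left_comm, mul_assoc] using this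

lemma norm_ofReal_mul_exp_mul {c : ℂ} (hc : c.re = 0) (r s : ℝ) :
    ‖(r : ℂ) * exp (c * s)‖ = |r| := by
  simp [Complex.norm_exp, hc]

lemma norm_ofReal_mul_exp_two_mul_I (r t : ℝ) : ‖(r : ℂ) * exp (2 * I * t)‖ = |r| :=
  norm_ofReal_mul_exp_mul (by simp) r t

noncomputable def polylogPrimitive (r t : ℝ) : ℂ :=
  (Li3c (r * exp (2 * I * t)) + Li3c (r * exp (-(2 * I * t)))) / 4
    + t * ((Li2c (r * exp (2 * I * t)) - Li2c (r * exp (-(2 * I * t)))) / (2 * I))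

lemma polylogPrimitive_one_zero :
    polylogPrimitive 1 0 = ((∑' n : ℕ, 1 / ((n : ℝ) + 1) ^ 3 : ℝ) : ℂ) / 2 := by
  simp only [polylogPrimitive, ofReal_zero, mul_zero, neg_zero, Complex.exp_zero, ofReal_one,
    one_mul, zero_mul, add_zero, Li3c, ofReal_tsum, one_pow]
  push_cast
  ring

lemma hasDerivAt_polylogPrimitive {r : ℝ} (hr0 : 0 ≤ r) (hr1 : r < 1) (t : ℝ) :
    HasDerivAt (polylogPrimitive r)
      (-(2 * t * Real.log ‖1 - r * exp (2 * I * t)‖) : ℝ) t := by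
  set z := (r : ℂ) * exp (2 * I * t)
  have hconj : conj z = r * exp (-(2 * I * t)) := by
    simp [z, ← exp_conj, map_ofNat]
  have hw (c : ℂ) (hc : c.re = 0) (s : ℝ) : ‖(r : ℂ) * exp (c * s)‖ ≤ r := by
    rw [norm_ofReal_mul_exp_mul hc, abs_of_nonneg hr0]
  have hplus (k : ℕ) := hasDerivAt_polylogSeries_comp k hr1
    (hasDerivAt_ofReal_mul_exp_mul r (2 * I)) (hw (2 * I) (by simp)) t
  have hminus (k : ℕ) := hasDerivAt_polylogSeries_comp k hr1
    (hasDerivAt_ofReal_mul_exp_mul r (-(2 * I))) (hw (-(2 * I)) (by simp)) t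
  simp only [neg_mul] at hminus
  have hz : ‖z‖ < 1 := (hw (2 * I) (by simp) t).trans_lt hr1
  have hlog := log_one_sub_add_log_one_sub_conj hz
  rw [hconj] at hlog
  have := (((hplus 2).add (hminus 2)).div_const 4).add
    ((hasDerivAt_id t).ofReal_comp.mul (((hplus 1).sub (hminus 1)).div_const (2 * I)))
  refine this.congr_deriv ?_
  rw [polylogSeries_one hz, polylogSeries_one (by rwa [← hconj, norm_conj])]
  -- The `Li₂` terms cancel since `i/2 + 1/(2i) = 0`; the `log` terms combine by `hlog`.
  simp only [Pi.sub_apply, id, one_add_one_eq_two]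
  push_cast
  field_simp
  linear_combination (-(8 * I * t)) * hlog + 4 * (polylogSeries 2 z -
    polylogSeries 2 (r * exp (-(2 * I * t)))) * I_sq

lemma continuous_log_norm_one_sub_ofReal_mul_exp {r : ℝ} (hr : |r| < 1) :
    Continuous fun t : ℝ => Real.log ‖1 - r * exp (2 * I * t)‖ := by
  refine Continuous.log (by fun_prop) fun t => (norm_pos_iff.mpr ?_).ne'
  intro h
  have := norm_ofReal_mul_exp_two_mul_I r t
  rw [← sub_eq_zero.mp h, norm_one] at this
  linarith

lemma integral_mul_log_norm_one_sub_ofReal_mul_exp {r : ℝ} (hr0 : 0 ≤ r) (hr1 : r < 1)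
    (θ : ℝ) :
    ((∫ t in (0 : ℝ)..θ, 2 * t * Real.log ‖1 - r * exp (2 * I * t)‖ : ℝ) : ℂ)
      = polylogPrimitive r 0 - polylogPrimitive r θ := by
  have hcont : Continuous fun t : ℝ => 2 * t * Real.log ‖1 - r * exp (2 * I * t)‖ :=
    (continuous_const.mul continuous_id).mul
      (continuous_log_norm_one_sub_ofReal_mul_exp (by rwa [abs_of_nonneg hr0]))
  have hFTC := integral_eq_sub_of_hasDerivAt (fun t _ => hasDerivAt_polylogPrimitive hr0 hr1 t)
    ((continuous_ofReal.comp hcont.neg).intervalIntegrable 0 θ)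
  rw [intervalIntegral.integral_ofReal, intervalIntegral.integral_neg] at hFTC
  push_cast at hFTC ⊢
  linear_combination -hFTC

lemma continuousOn_polylogPrimitive (t : ℝ) :
    ContinuousOn (fun r => polylogPrimitive r t) (Icc (-1) 1) := by
  have hball (c : ℂ) (hc : c.re = 0) :
      MapsTo (fun r : ℝ => (r : ℂ) * exp (c * t)) (Icc (-1) 1) (Metric.closedBall 0 1) :=
    fun r hr => by
    rw [mem_closedBall_zero_iff, norm_ofReal_mul_exp_mul hc]
    exact abs_le.mpr hr
  have hplus {k : ℕ} (hk : 2 ≤ k) :=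
    (continuousOn_polylogSeries hk).comp (by fun_prop) (hball (2 * I) (by simp))
  have hminus {k : ℕ} (hk : 2 ≤ k) :=
    (continuousOn_polylogSeries hk).comp (by fun_prop) (hball (-(2 * I)) (by simp))
  simp only [Function.comp_def, neg_mul] at hplus hminus
  exact (((hplus (k := 3) (by norm_num)).add (hminus (by norm_num))).div_const 4).add
    (continuousOn_const.mul (((hplus le_rfl).sub (hminus le_rfl)).div_const _))

lemma norm_one_sub_ofReal_mul_exp_sq (r t : ℝ) :
    ‖1 - r * exp (2 * I * t)‖ ^ 2 = (1 - r) ^ 2 + 4 * r * Real.sin t ^ 2 := by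
  rw [Complex.sq_norm, show 2 * I * (t : ℂ) = (2 * t : ℝ) * I by push_cast; ring, exp_mul_I,
    ← ofReal_cos, ← ofReal_sin, normSq_apply]
  simp only [sub_re, sub_im, mul_re, mul_im, add_re, add_im, I_re, I_im, ofReal_re, ofReal_im,
    one_re, one_im]
  linear_combination r ^ 2 * Real.sin_sq_add_cos_sq (2 * t) - 2 * r * Real.cos_two_mul t
    - 4 * r * Real.sin_sq_add_cos_sq t

lemma norm_one_sub_exp_two_mul_I (t : ℝ) : ‖1 - exp (2 * I * t)‖ = 2 * |Real.sin t| := by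
  have h := norm_one_sub_ofReal_mul_exp_sq 1 t
  rw [ofReal_one, one_mul] at h
  rw [← Real.sqrt_sq (norm_nonneg _), h, ← abs_two, ← abs_mul, ← Real.sqrt_sq_eq_abs]
  ring_nf

lemma abs_sin_le_norm_one_sub_ofReal_mul_exp {r : ℝ} (hr : 1 / 4 ≤ r) (t : ℝ) :
    |Real.sin t| ≤ ‖1 - r * exp (2 * I * t)‖ := by
  refine abs_le_of_sq_le_sq ?_ (norm_nonneg _)
  rw [norm_one_sub_ofReal_mul_exp_sq]
  nlinarith [sq_nonneg (1 - r), sq_nonneg (Real.sin t)]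

lemma norm_one_sub_ofReal_mul_exp_le_two {r : ℝ} (hr : |r| ≤ 1) (t : ℝ) :
    ‖1 - r * exp (2 * I * t)‖ ≤ 2 := by
  calc ‖1 - r * exp (2 * I * t)‖
      ≤ ‖(1 : ℂ)‖ + ‖(r : ℂ) * exp (2 * I * t)‖ := norm_sub_le _ _
    _ ≤ 2 := by rw [norm_one, norm_ofReal_mul_exp_two_mul_I]; linarith

lemma abs_log_le_abs_log_add_log {a b x : ℝ} (ha : 0 < a) (hax : a ≤ x) (hxb : x ≤ b)
    (hb : 1 ≤ b) : |Real.log x| ≤ |Real.log a| + Real.log b := by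
  have h1 := Real.log_le_log ha hax
  have h2 := Real.log_le_log (ha.trans_le hax) hxb
  have h3 := Real.log_nonneg hb
  rw [abs_le]
  constructor <;> linarith [neg_abs_le (Real.log a), le_abs_self (Real.log a)]

lemma tendsto_integral_mul_log_norm_one_sub_ofReal_mul_exp {θ : ℝ} (hθ0 : 0 ≤ θ)
    (hθ : θ < π) :
    Tendsto (fun r : ℝ => ∫ t in (0 : ℝ)..θ, 2 * t * Real.log ‖1 - r * exp (2 * I * t)‖)
      (𝓝[<] 1) (𝓝 (∫ t in (0 : ℝ)..θ, 2 * t * Real.log (2 * Real.sin t))) := by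
  have hr : Ioo (1 / 4 : ℝ) 1 ∈ 𝓝[<] 1 := Ioo_mem_nhdsLT (by norm_num)
  have hpos (t : ℝ) (ht : t ∈ uIoc 0 θ) : 0 < t ∧ t ≤ θ ∧ 0 < Real.sin t := by
    rw [uIoc_of_le hθ0] at ht
    exact ⟨ht.1, ht.2, Real.sin_pos_of_pos_of_lt_pi ht.1 (ht.2.trans_lt hθ)⟩
  refine tendsto_integral_filter_of_dominated_convergence
    (fun t => 2 * θ * (|Real.log (Real.sin t)| + Real.log 2)) ?_ ?_ ?_ ?_
  · filter_upwards [hr] with r hr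
    exact ((continuous_const.mul continuous_id).mul (continuous_log_norm_one_sub_ofReal_mul_exp
      (abs_lt.mpr ⟨by linarith [hr.1], hr.2⟩))).aestronglyMeasurable
  · filter_upwards [hr] with r hr
    refine .of_forall fun t hmem => ?_
    obtain ⟨ht0, htθ, hsin⟩ := hpos t hmem
    have hlog := abs_log_le_abs_log_add_log (abs_pos.mpr hsin.ne')
      (abs_sin_le_norm_one_sub_ofReal_mul_exp hr.1.le t)
      (norm_one_sub_ofReal_mul_exp_le_two (abs_le.mpr ⟨by linarith [hr.1], hr.2.le⟩) t)
      one_le_two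
    rw [Real.log_abs] at hlog
    rw [norm_mul, Real.norm_eq_abs, Real.norm_eq_abs, abs_of_pos (by positivity : 0 < 2 * t)]
    gcongr
  · exact (intervalIntegrable_log_sin.abs.add intervalIntegrable_const).const_mul _
  · refine .of_forall fun t hmem => ?_
    obtain ⟨-, -, hsin⟩ := hpos t hmem
    have hlim : Tendsto (fun r : ℝ => ‖1 - r * exp (2 * I * t)‖) (𝓝 1)
        (𝓝 (2 * Real.sin t)) := by
      have := ((by fun_prop : Continuous fun r : ℝ => ‖1 - r * exp (2 * I * t)‖).tendsto 1)
      rwa [ofReal_one, one_mul, norm_one_sub_exp_two_mul_I, abs_of_pos hsin] at this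
    exact ((((Real.continuousAt_log (by positivity)).tendsto.comp hlim).const_mul
      (2 * t)).mono_left nhdsWithin_le_nhds)

lemma integral_mul_log_two_sin {θ : ℝ} (hθ0 : 0 ≤ θ) (hθ : θ < π) :
    ((∫ t in (0 : ℝ)..θ, 2 * t * Real.log (2 * Real.sin t) : ℝ) : ℂ)
      = polylogPrimitive 1 0 - polylogPrimitive 1 θ := by
  have hlim (s : ℝ) :
      Tendsto (fun r => polylogPrimitive r s) (𝓝[<] 1) (𝓝 (polylogPrimitive 1 s)) :=
    (continuousOn_polylogPrimitive s 1 ⟨by norm_num, le_rfl⟩).mono_of_mem_nhdsWithin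
      (Icc_mem_nhdsLT (by norm_num))
  refine tendsto_nhds_unique ((continuous_ofReal.tendsto _).comp
    (tendsto_integral_mul_log_norm_one_sub_ofReal_mul_exp hθ0 hθ))
    (((hlim 0).sub (hlim θ)).congr' ?_)
  filter_upwards [Ioo_mem_nhdsLT (by norm_num : (0 : ℝ) < 1)] with r hr
  exact (integral_mul_log_norm_one_sub_ofReal_mul_exp hr.1.le hr.2 θ).symm

theorem S_v_v_closed_form (v : ℝ) (hv0 : 0 < v) (hv1 : v ≤ 1) :
    ((∫ x in (0:ℝ)..1, (Real.arcsin (v * x)) ^ 2 / x : ℝ) : ℂ) =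
      (Li3c (Complex.exp (2 * Complex.I * (Real.arcsin v : ℂ))) +
        Li3c (Complex.exp (-(2 * Complex.I * (Real.arcsin v : ℂ))))) / 4
      - ((∑' n : ℕ, 1 / ((n : ℝ) + 1) ^ 3 : ℝ) : ℂ) / 2
      + (Real.arcsin v : ℂ) *
          ((Li2c (Complex.exp (2 * Complex.I * (Real.arcsin v : ℂ))) -
            Li2c (Complex.exp (-(2 * Complex.I * (Real.arcsin v : ℂ))))) /
            (2 * Complex.I))
      + ((Real.arcsin v : ℂ)) ^ 2 * ((Real.log (2 * v) : ℝ) : ℂ) := by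
  have hθ0 : 0 ≤ arcsin v := arcsin_nonneg.mpr hv0.le
  have hθπ : arcsin v < π := (arcsin_le_pi_div_two v).trans_lt (by linarith [pi_pos])
  rw [integral_comp_mul_div_self (fun u => arcsin u ^ 2) hv0.ne',
    integral_arcsin_sq_div_self hv0.le hv1, integral_sq_mul_cot hθ0 hθπ,
    Real.sin_arcsin (by linarith) hv1, ofReal_sub,
    integral_mul_log_two_sin hθ0 hθπ, polylogPrimitive_one_zero]
  simp only [polylogPrimitive, ofReal_one, one_mul]
  push_cast
  ring
end
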